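/- arXiv:1601.06890 — 6 statements merged into one kernel-verified Lean document; each statement's English description precedes it below -/
import Mathlib

section
/- Let G be a balanced bipartite graph on 2n vertices with minimum degree δ(G) ≥ k, where 1 ≤ k ≤ n/2. If e(G) > max{ n(n-k) + k², n(n - ⌊n/2⌋) + ⌊n/2⌋² }, then G is Hamiltonian. -/
open SimpleGraph

attribute [local instance] Classical.propDecidable

/-- The (adjacency) spectral radius of a graph, as the largest adjacency eigenvalue. -/
noncomputable def specRad {V : Type*} [Fintype V] [DecidableEq V] (G : SimpleGraph V) : ℝ :=
  sSup (spectrum ℝ (G.adjMatrix ℝ))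

/-- The signless Laplacian matrix `Q = D + A` of a graph. -/
noncomputable def signlessLaplacian {V : Type*} [Fintype V] [DecidableEq V]
    (G : SimpleGraph V) : Matrix V V ℝ :=
  Matrix.diagonal (fun v => (G.degree v : ℝ)) + G.adjMatrix ℝ

/-- The signless Laplacian spectral radius of a graph. -/
noncomputable def qSpec {V : Type*} [Fintype V] [DecidableEq V] (G : SimpleGraph V) : ℝ :=
  sSup (spectrum ℝ (signlessLaplacian G))

/-- A graph is traceable if it has a Hamilton path. -/
def SimpleGraph.IsTraceable {V : Type*} (G : SimpleGraph V) : Prop :=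
  ∃ (u v : V) (p : G.Walk u v), p.IsHamiltonian

/-- A graph on `Fin m ⊕ Fin n` is bipartite with bipartition `{Fin m, Fin n}`:
all edges go between the two parts. -/
def CrossOnly {m n : ℕ} (G : SimpleGraph (Fin m ⊕ Fin n)) : Prop :=
  (∀ x y : Fin m, ¬ G.Adj (Sum.inl x) (Sum.inl y)) ∧
  (∀ x y : Fin n, ¬ G.Adj (Sum.inr x) (Sum.inr y))

/-- The graph `Q_n^k = K_{k,n-k-1} ⊔ Φ_{n-k,k+1}`: a vertex `inl x` with `x < k` is joined to
all of the right side, a vertex `inr y` with `y < n-k-1` is joined to all of the left side,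
and there are no other edges. -/
def Qgraph (n k : ℕ) : SimpleGraph (Fin n ⊕ Fin n) :=
  SimpleGraph.fromRel (fun a b =>
    match a, b with
    | Sum.inl x, Sum.inr y => x.val < k ∨ y.val < n - k - 1
    | _, _ => False)

/-- The graph `R_n^k = K_{k,k} ∪ K_{n-k,n-k}` (disjoint union). -/
def Rgraph (n k : ℕ) : SimpleGraph (Fin n ⊕ Fin n) :=
  SimpleGraph.fromRel (fun a b =>
    match a, b with
    | Sum.inl x, Sum.inr y => (x.val < k ∧ y.val < k) ∨ (k ≤ x.val ∧ k ≤ y.val)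
    | _, _ => False)

/-- The graph `S_n^k = K_{k,n-k-1} ⊔ Φ_{n-k,k}` on parts of sizes `n` and `n-1`. -/
def Sgraph (n k : ℕ) : SimpleGraph (Fin n ⊕ Fin (n - 1)) :=
  SimpleGraph.fromRel (fun a b =>
    match a, b with
    | Sum.inl x, Sum.inr y => x.val < k ∨ y.val < n - k - 1
    | _, _ => False)

/-- The quasi-complement of a bipartite graph: `inl x` and `inr y` are adjacent iff they are
nonadjacent in `G`; no edges inside the parts. -/
def quasiComplement {m n : ℕ} (G : SimpleGraph (Fin m ⊕ Fin n)) : SimpleGraph (Fin m ⊕ Fin n) :=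
  SimpleGraph.fromRel (fun a b =>
    match a, b with
    | Sum.inl x, Sum.inr y => ¬ G.Adj (Sum.inl x) (Sum.inr y)
    | _, _ => False)

/-- `G` is isomorphic to a subgraph of `H`. -/
def IsoSubgraph {V W : Type*} (G : SimpleGraph V) (H : SimpleGraph W) : Prop :=
  ∃ H' : SimpleGraph W, H' ≤ H ∧ Nonempty (G ≃g H')

/-
Suppose `G` is not Hamiltonian and enlarge it to a maximal non-Hamiltonian bipartite graph `H`
with the same parts. `H` is not complete, since `K_{n,n}` is Hamiltonian for `n ≥ 2`. For a
non-edge `ab` of `H` (`a` on the left, `b` on the right), `H + ab` has a Hamilton cycle, so `H` has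
a Hamilton path from `a` to `b`. On this path the predecessors of the neighbours of `a` lie on the
left and none of them is adjacent to `b` (otherwise a rotation closes a Hamilton cycle), so
`d(a) + d(b) ≤ n`. Summing the left degrees over the neighbours and the non-neighbours of `b`
gives `e(H) ≤ d(b) n + (n - d(b))²`, and for `k ≤ d(b) ≤ n - k` this is at most
`n(n-k) + k²`.
-/

open Finset

theorem Nat.mul_add_sub_sq_le {n k d : ℕ} (hkd : k ≤ d) (hdk : d + k ≤ n) :
    d * n + (n - d) ^ 2 ≤ n * (n - k) + k ^ 2 := by
  obtain ⟨x, rfl⟩ := Nat.exists_eq_add_of_le hkd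
  obtain ⟨y, rfl⟩ := Nat.exists_eq_add_of_le hdk
  rw [show k + x + k + y - (k + x) = k + y by omega, show k + x + k + y - k = k + x + y by omega]
  nlinarith [Nat.zero_le (x * y)]

namespace SimpleGraph

variable {V : Type*} {G : SimpleGraph V}

theorem IsBipartiteWith.sup_edge {s t : Set V} (hG : G.IsBipartiteWith s t) {a b : V}
    (ha : a ∈ s) (hb : b ∈ t) : (G ⊔ edge a b).IsBipartiteWith s t where
  disjoint := hG.disjoint
  mem_of_adj v w h := by
    rcases h with h | h
    · exact hG.mem_of_adj h
    · rcases (edge_adj ..).1 h |>.1 with ⟨rfl, rfl⟩ | ⟨rfl, rfl⟩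
      exacts [.inl ⟨ha, hb⟩, .inr ⟨hb, ha⟩]

theorem IsBipartiteWith.card_edgeFinset_le [Fintype V] [DecidableRel G.Adj] {s t : Finset V}
    (hG : G.IsBipartiteWith s t) {b : V} (hb : b ∈ t)
    (hpair : ∀ a ∈ s, ¬G.Adj a b → G.degree a + G.degree b ≤ #s) :
    #G.edgeFinset ≤ G.degree b * #t + (#s - G.degree b) ^ 2 := by
  have hN : s.filter (G.Adj · b) = G.neighborFinset b :=
    (isBipartiteWith_neighborFinset' hG hb).symm
  have hcard : #(s.filter (¬G.Adj · b)) = #s - G.degree b := by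
    have := card_filter_add_card_filter_not (s := s) (G.Adj · b)
    rw [hN, card_neighborFinset_eq_degree] at this
    omega
  rw [← isBipartiteWith_sum_degrees_eq_card_edges hG,
    ← sum_filter_add_sum_filter_not s (G.Adj · b), sq]
  gcongr
  · rw [hN, ← card_neighborFinset_eq_degree]
    exact sum_le_card_nsmul _ _ _ fun v hv =>
      isBipartiteWith_degree_le hG (isBipartiteWith_neighborFinset_subset' hG hb hv)
  · rw [← hcard]
    refine sum_le_card_nsmul _ _ _ fun v hv => ?_
    rw [mem_filter] at hv
    have := hpair v hv.1 hv.2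
    omega

section Hamiltonian

variable [Fintype V] [DecidableEq V]

theorem Walk.IsHamiltonianCycle.transfer {H : SimpleGraph V} {u : V} {c : G.Walk u u}
    (hc : c.IsHamiltonianCycle) (hH : ∀ e ∈ c.edges, e ∈ H.edgeSet) :
    (c.transfer H hH).IsHamiltonianCycle := by
  rw [Walk.isHamiltonianCycle_iff_isCycle_and_length_eq, Walk.length_transfer] at *
  exact ⟨hc.1.transfer hH, hc.2⟩

theorem Walk.IsHamiltonian.isHamiltonianCycle_cons {u v : V} {p : G.Walk u v}
    (hp : p.IsHamiltonian) (h : G.Adj v u) (hV : 3 ≤ Fintype.card V) :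
    (Walk.cons h p).IsHamiltonianCycle := by
  rw [Walk.isHamiltonianCycle_iff_isCycle_and_length_eq, Walk.cons_isCycle_iff,
    Walk.length_cons, hp.length_eq]
  refine ⟨⟨hp.isPath, fun huv => ?_⟩, by omega⟩
  have := hp.isPath.length_eq_one_of_mem_edges (Sym2.eq_swap ▸ huv)
  rw [hp.length_eq] at this
  omega

theorem IsHamiltonian.map {W : Type*} [Fintype W] [DecidableEq W] {H : SimpleGraph W}
    (f : G →g H) (hf : Function.Bijective f) (hG : G.IsHamiltonian) : H.IsHamiltonian := by
  intro hW
  obtain ⟨a, p, hp⟩ := hG (by rwa [Fintype.card_of_bijective hf])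
  exact ⟨f a, p.map f, hp.map hf⟩

theorem isHamiltonian_of_isChain {l : List V} (hne : l ≠ []) (hnd : l.Nodup)
    (hmem : ∀ v, v ∈ l) (hlen : 3 ≤ l.length) (hc : l.IsChain G.Adj)
    (hclose : G.Adj (l.getLast hne) (l.head hne)) : G.IsHamiltonian := by
  set p := Walk.ofSupport l hne hc
  have hp : p.IsHamiltonian :=
    (Walk.IsPath.mk' (by simpa [p] using hnd)).isHamiltonian_of_mem (by simpa [p] using hmem)
  have hV : 3 ≤ Fintype.card V := by simpa [p, ← hp.length_support] using hlen
  exact fun _ => ⟨_, _, hp.isHamiltonianCycle_cons hclose hV⟩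

-- The Hamilton cycle is `l[j], …, l[l.length - 1], l[j - 1], …, l[0]`.
theorem isHamiltonian_of_adj_getElem {l : List V} (hnd : l.Nodup) (hmem : ∀ v, v ∈ l)
    (hc : l.IsChain G.Adj) (hlen : 3 ≤ l.length) {j : ℕ} (hj0 : 0 < j) (hj : j < l.length)
    (h₁ : G.Adj l[0] l[j]) (h₂ : G.Adj l[l.length - 1] l[j - 1]) : G.IsHamiltonian := by
  have hperm : (l.drop j ++ (l.take j).reverse).Perm l :=
    (List.perm_append_comm.trans ((List.reverse_perm _).append_right _)).trans
      (by rw [List.take_append_drop])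
  have hne : l.drop j ++ (l.take j).reverse ≠ [] := by simp; omega
  refine isHamiltonian_of_isChain hne (hperm.nodup_iff.2 hnd) (fun v => hperm.mem_iff.2 (hmem v))
    (by rw [hperm.length_eq]; exact hlen) ?_ ?_
  · rw [List.isChain_append]
    refine ⟨hc.drop j, List.isChain_reverse.2 ((hc.take j).imp fun _ _ h => h.symm), ?_⟩
    have hlast : (l.drop j).getLast? = some l[l.length - 1] := by
      rw [List.getLast?_drop, if_neg hj.not_ge, List.getLast?_eq_getElem?,
        List.getElem?_eq_getElem]
    have hhead : (l.take j).reverse.head? = some l[j - 1] := by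
      simp [List.getLast?_take, hj0.ne', List.getElem?_eq_getElem (by omega : j - 1 < l.length)]
    rw [hlast, hhead]
    rintro _ ⟨⟩ _ ⟨⟩
    exact h₂
  · have hl : l ≠ [] := List.ne_nil_of_length_pos (by omega)
    simpa [List.getLast_append, List.head_append, hj0.ne', hj, List.head_take, hl,
      List.head_eq_getElem] using h₁

open Walk in
theorem exists_isHamiltonian_walk_of_isHamiltonian_sup_edge {a b : V} (hab : a ≠ b)
    (hV : Fintype.card V ≠ 1) (hG : ¬G.IsHamiltonian) (h : (G ⊔ edge a b).IsHamiltonian) :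
    ∃ p : G.Walk a b, p.IsHamiltonian := by
  have hG_edges {u v : V} (q : (G ⊔ edge a b).Walk u v) (hq : s(a, b) ∉ q.edges) :
      ∀ e ∈ q.edges, e ∈ G.edgeSet := by
    intro e he
    have := q.edges_subset_edgeSet he
    rw [edgeSet_sup, edgeSet_edge_of_ne hab, Set.mem_union, Set.mem_singleton_iff] at this
    exact this.resolve_right (by rintro rfl; exact hq he)
  obtain ⟨x, c, hc⟩ := h hV
  have hab_mem : s(a, b) ∈ c.edges := by
    by_contra hnot
    exact hG fun _ => ⟨x, _, hc.transfer (hG_edges c hnot)⟩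
  have ha : a ∈ c.support := c.fst_mem_support_of_mem_edges hab_mem
  have hc' := hc.rotate ha
  have hb : b ∈ (c.rotate a ha).support := hc'.mem_support b
  have hsplit := (c.rotate a ha).take_spec hb
  set p := (c.rotate a ha).takeUntil b hb
  set q := (c.rotate a ha).dropUntil b hb
  have hlen : p.length + q.length = Fintype.card V := by
    rw [← length_append, hsplit, hc'.length_eq]
  have hp : p.IsPath := hc'.isCycle.isPath_takeUntil hb
  have hq : q.IsPath := (hsplit ▸ hc'.isCycle).isPath_of_append_right (not_nil_of_ne hab)
  have hdisj := hc'.isCycle.isTrail.disjoint_edges_takeUntil_dropUntil hb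
  have hab_mem' : s(a, b) ∈ p.edges ∨ s(a, b) ∈ q.edges := by
    rw [← List.mem_append, ← edges_append, hsplit]
    exact (c.rotate_edges a ha).perm.mem_iff.2 hab_mem
  rcases hab_mem' with hab_p | hab_q
  · have h1 := hp.length_eq_one_of_mem_edges hab_p
    refine ⟨(q.transfer G (hG_edges q (hdisj hab_p))).reverse, ?_⟩
    rw [isHamiltonian_iff_isPath_and_length_eq, isPath_reverse_iff, length_reverse,
      length_transfer]
    exact ⟨hq.transfer _, by omega⟩
  · have h1 := hq.length_eq_one_of_mem_edges (Sym2.eq_swap ▸ hab_q)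
    refine ⟨p.transfer G (hG_edges p fun h => hdisj h hab_q), ?_⟩
    rw [isHamiltonian_iff_isPath_and_length_eq, length_transfer]
    exact ⟨hp.transfer _, by omega⟩

theorem IsBipartiteWith.exists_maximal_not_isHamiltonian {s t : Set V}
    (hG : G.IsBipartiteWith s t) (hG' : ¬G.IsHamiltonian) :
    ∃ H, G ≤ H ∧ H.IsBipartiteWith s t ∧ ¬H.IsHamiltonian ∧
      ∀ a ∈ s, ∀ b ∈ t, ¬H.Adj a b → (H ⊔ edge a b).IsHamiltonian := by
  obtain ⟨H, hGH, hH⟩ := Finite.exists_le_maximal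
    (p := fun H : SimpleGraph V => H.IsBipartiteWith s t ∧ ¬H.IsHamiltonian) ⟨hG, hG'⟩
  refine ⟨H, hGH, hH.prop.1, hH.prop.2, fun a ha b hb hab => by_contra fun hnot => hab ?_⟩
  have hle := hH.2 ⟨hH.prop.1.sup_edge ha hb, hnot⟩ le_sup_left
  exact hle (.inr ((edge_adj ..).2 ⟨.inl ⟨rfl, rfl⟩, hH.prop.1.disjoint.ne_of_mem ha hb⟩))

theorem IsBipartiteWith.degree_add_degree_le_of_isHamiltonian_walk [DecidableRel G.Adj]
    {s t : Finset V} (hG : G.IsBipartiteWith s t) (hG' : ¬G.IsHamiltonian)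
    (hV : 3 ≤ Fintype.card V) {a b : V} (ha : a ∈ s) (hb : b ∈ t) {p : G.Walk a b}
    (hp : p.IsHamiltonian) : G.degree a + G.degree b ≤ #s := by
  set l := p.support
  have hnd : l.Nodup := hp.isPath.support_nodup
  have hc : l.IsChain G.Adj := p.isChain_adj_support
  have hlen : l.length = Fintype.card V := hp.length_support
  have hl0 : l[0] = a := by simp [l, Walk.support_getElem_eq_getVert]
  have hlast : l[l.length - 1] = b := by simp [l, Walk.support_getElem_eq_getVert]
  have hlt (v : V) : l.idxOf v < l.length := List.idxOf_lt_length_of_mem (hp.mem_support v)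
  have hget (v : V) : l[l.idxOf v]'(hlt v) = v := List.getElem_idxOf (hlt v)
  have hpos {v : V} (hv : v ∈ G.neighborFinset a) : 0 < l.idxOf v := by
    refine Nat.pos_of_ne_zero fun h0 => G.ne_of_adj ((mem_neighborFinset ..).1 hv) ?_
    rw [← hget v, ← hl0]
    simp_rw [h0]
  set pred : V → V := fun v => l.getD (l.idxOf v - 1) a
  have hpred (v : V) : pred v = l[l.idxOf v - 1]'(by have := hlt v; omega) :=
    List.getD_eq_getElem ..
  have hpred_adj {v : V} (hv : v ∈ G.neighborFinset a) : G.Adj (pred v) v := by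
    have := List.isChain_iff_getElem.1 hc (l.idxOf v - 1)
      (by have := hlt v; have := hpos hv; omega)
    simp_rw [Nat.sub_add_cancel (hpos hv), hget] at this
    rwa [hpred]
  have hinj : Set.InjOn pred (G.neighborFinset a) := by
    intro v hv w hw hvw
    rw [hpred, hpred, hnd.getElem_inj_iff] at hvw
    rw [← hget v, ← hget w]
    simp_rw [show l.idxOf v = l.idxOf w by have := hpos hv; have := hpos hw; omega]
  have hdisj : Disjoint ((G.neighborFinset a).image pred) (G.neighborFinset b) := by
    rw [Finset.disjoint_left]
    rintro _ hu hbu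
    obtain ⟨v, hv, rfl⟩ := mem_image.1 hu
    refine hG' (isHamiltonian_of_adj_getElem hnd hp.mem_support hc
      (by omega) (hpos hv) (hlt v) ?_ ?_)
    · rw [hl0, hget]
      exact (mem_neighborFinset ..).1 hv
    · rw [hlast, ← hpred]
      exact (mem_neighborFinset ..).1 hbu
  have hsub : (G.neighborFinset a).image pred ⊆ s := by
    simp only [subset_iff, mem_image]
    rintro _ ⟨v, hv, rfl⟩
    have hvt : v ∈ (t : Set V) := hG.mem_of_mem_adj ha ((mem_neighborFinset ..).1 hv)
    exact hG.mem_of_mem_adj' hvt (hpred_adj hv)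
  calc G.degree a + G.degree b = #((G.neighborFinset a).image pred ∪ G.neighborFinset b) := by
        rw [card_union_of_disjoint hdisj, card_image_of_injOn hinj,
          card_neighborFinset_eq_degree, card_neighborFinset_eq_degree]
    _ ≤ #s := card_le_card (union_subset hsub (isBipartiteWith_neighborFinset_subset' hG hb))

theorem IsBipartiteWith.degree_add_degree_le_of_isHamiltonian_sup_edge [DecidableRel G.Adj]
    {s t : Finset V} (hG : G.IsBipartiteWith s t) (hG' : ¬G.IsHamiltonian)
    (hV : 3 ≤ Fintype.card V) {a b : V} (ha : a ∈ s) (hb : b ∈ t)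
    (hab : (G ⊔ edge a b).IsHamiltonian) : G.degree a + G.degree b ≤ #s := by
  obtain ⟨p, hp⟩ := exists_isHamiltonian_walk_of_isHamiltonian_sup_edge
    (hG.disjoint.ne_of_mem ha hb) (by omega) hG' hab
  exact hG.degree_add_degree_le_of_isHamiltonian_walk hG' hV ha hb hp

end Hamiltonian

theorem cycleGraph_isHamiltonian {m : ℕ} (hm : 3 ≤ m) : (cycleGraph m).IsHamiltonian := by
  obtain ⟨m, rfl⟩ := Nat.exists_eq_add_of_le' hm
  exact fun _ => ⟨0, cycleGraph.cycle m,
    Walk.isHamiltonianCycle_iff_isCycle_and_length_eq.2 ⟨cycleGraph.isCycle_cycle, by simp⟩⟩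

theorem completeBipartiteGraph_fin_isHamiltonian {n : ℕ} (hn : 2 ≤ n) :
    (completeBipartiteGraph (Fin n) (Fin n)).IsHamiltonian := by
  let f : Fin (2 * n) → Fin n ⊕ Fin n := fun i =>
    if i.val % 2 = 0 then .inl ⟨i / 2, by omega⟩ else .inr ⟨i / 2, by omega⟩
  have hf : Function.Injective f := by
    intro i j hij
    simp only [f] at hij
    split_ifs at hij <;> simp only [Sum.inl.injEq, Sum.inr.injEq, Fin.mk.injEq] at hij
    all_goals omega
  have hsub (i j : Fin (2 * n)) (h : (i - j).val = 1) : i.val % 2 ≠ j.val % 2 := by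
    rcases le_or_gt j i with hji | hij
    · rw [Fin.coe_sub_iff_le.2 hji] at h; omega
    · rw [Fin.coe_sub_iff_lt.2 hij] at h; omega
  have hadj {i j : Fin (2 * n)} (h : (cycleGraph (2 * n)).Adj i j) :
      (completeBipartiteGraph (Fin n) (Fin n)).Adj (f i) (f j) := by
    have := (cycleGraph_adj'.1 h).elim (hsub i j) fun h => (hsub j i h).symm
    simp only [f]
    split_ifs <;> simp_all
  exact (cycleGraph_isHamiltonian (by omega)).map ⟨f, hadj⟩
    ((Fintype.bijective_iff_injective_and_card f).2 ⟨hf, by simp; ring⟩)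

theorem exists_not_adj_inl_inr_of_not_isHamiltonian {n : ℕ} (hn : 2 ≤ n)
    {H : SimpleGraph (Fin n ⊕ Fin n)} (hH : ¬H.IsHamiltonian) :
    ∃ x y, ¬H.Adj (.inl x) (.inr y) := by
  by_contra! hK
  refine hH ((completeBipartiteGraph_fin_isHamiltonian hn).mono ?_)
  rintro (u | u) (v | v) huv
  exacts [by simp at huv, hK u v, (hK v u).symm, by simp at huv]

end SimpleGraph

theorem CrossOnly.isBipartiteWith {m n : ℕ} {G : SimpleGraph (Fin m ⊕ Fin n)}
    (hG : CrossOnly G) :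
    G.IsBipartiteWith (univ.map .inl : Finset (Fin m ⊕ Fin n))
      (univ.map .inr : Finset (Fin m ⊕ Fin n)) where
  disjoint := by simp [Set.disjoint_left]
  mem_of_adj := by
    rintro (x | x) (y | y) h
    exacts [(hG.1 x y h).elim, by simp, by simp, (hG.2 x y h).elim]

/-- Moon–Moser: a balanced bipartite graph on `2n` vertices with `δ(G) ≥ k`, `1 ≤ k ≤ n/2` and
`e(G) > max{n(n-k)+k², n(n-⌊n/2⌋)+⌊n/2⌋²}` is Hamiltonian. -/
theorem stmt_1 (n k : ℕ) (G : SimpleGraph (Fin n ⊕ Fin n)) (hbip : CrossOnly G)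
    (hk1 : 1 ≤ k) (hk2 : k ≤ n / 2) (hdeg : ∀ v, k ≤ G.degree v)
    (he : max (n * (n - k) + k ^ 2) (n * (n - n / 2) + (n / 2) ^ 2) < G.edgeFinset.card) :
    G.IsHamiltonian := by
  have hn : 2 ≤ n := by omega
  by_contra hG
  obtain ⟨H, hGH, hH, hH', hmax⟩ := hbip.isBipartiteWith.exists_maximal_not_isHamiltonian hG
  obtain ⟨x, y, hxy⟩ := exists_not_adj_inl_inr_of_not_isHamiltonian hn hH'
  have hpair : ∀ a ∈ (univ.map .inl : Finset (Fin n ⊕ Fin n)),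
      ∀ b ∈ (univ.map .inr : Finset (Fin n ⊕ Fin n)),
      ¬H.Adj a b → H.degree a + H.degree b ≤ n := fun a ha b hb hab => by
    simpa using hH.degree_add_degree_le_of_isHamiltonian_sup_edge hH' (by simp; omega) ha hb
      (hmax a ha b hb hab)
  have hk (v) : k ≤ H.degree v := (hdeg v).trans (degree_le_of_le hGH)
  have hy : H.degree (.inr y) + k ≤ n := by
    have := hpair _ (by simp) _ (by simp) hxy
    have := hk (.inl x)
    omega
  have hedges : #G.edgeFinset ≤ n * (n - k) + k ^ 2 := calc
    #G.edgeFinset ≤ #H.edgeFinset := card_le_card (edgeFinset_mono hGH)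
    _ ≤ H.degree (.inr y) * n + (n - H.degree (.inr y)) ^ 2 := by
      simpa using hH.card_edgeFinset_le (by simp) fun a ha hab => by
        simpa using hpair a ha _ (by simp) hab
    _ ≤ n * (n - k) + k ^ 2 := Nat.mul_add_sub_sq_le (hk _) hy
  exact ((le_max_left _ _).trans_lt he).not_ge hedges
end

section
/- For any balanced bipartite graph G on 2n vertices, the signless Laplacian spectral radius satisfies q(G) ≤ e(G)/n + n. -/
open SimpleGraph

attribute [local instance] Classical.propDecidable

/-! For an eigenvalue `λ > 0` of `Q` with eigenvector `x`, the vector `|x|` satisfies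
`λ |x| ≤ Q |x|`, and a Collatz–Wielandt argument gives a vertex `v` of positive degree with
`λ ≤ d v + m v`, where `m v` is the average degree of the neighbours of `v`.
In a bipartite graph with parts of size `n` the neighbours of `v` are independent, so their
degrees sum to at most `e(G)` and to at most `n · d v`; with `d v ≤ n` this gives
`d v + m v ≤ e(G) / n + n`. -/

open Finset Matrix

lemma Matrix.exists_mulVec_eq_smul_of_mem_spectrum {ι K : Type*} [Fintype ι] [DecidableEq ι]
    [Field K] {A : Matrix ι ι K} {μ : K} (hμ : μ ∈ spectrum K A) :
    ∃ x ≠ 0, A *ᵥ x = μ • x := by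
  rw [← spectrum_toLin', ← Module.End.hasEigenvalue_iff_mem_spectrum] at hμ
  obtain ⟨x, hx⟩ := hμ.exists_hasEigenvector
  exact ⟨x, hx.2, hx.apply_eq_smul⟩

section SignlessLaplacian

variable {V : Type*} [Fintype V] (G : SimpleGraph V)

lemma signlessLaplacian_mulVec_apply [DecidableEq V] (x : V → ℝ) (v : V) :
    (signlessLaplacian G *ᵥ x) v = G.degree v * x v + ∑ u ∈ G.neighborFinset v, x u := by
  simp [signlessLaplacian, add_mulVec, mulVec_diagonal, adjMatrix_mulVec_apply]

/- Collatz–Wielandt with the weights `max (degree v) 1`: at a vertex maximising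
`y v / max (degree v) 1`, that vertex and all of its neighbours have positive degree, so the
weights there are exactly the degrees. -/
lemma exists_le_degree_add_div_of_subeigenvector {lam : ℝ} (hlam : 0 < lam) {y : V → ℝ}
    (hy : 0 ≤ y) (hy0 : y ≠ 0)
    (hsub : ∀ v, lam * y v ≤ G.degree v * y v + ∑ u ∈ G.neighborFinset v, y u) :
    ∃ v, 0 < G.degree v ∧
      lam ≤ G.degree v + (∑ u ∈ G.neighborFinset v, (G.degree u : ℝ)) / G.degree v := by
  obtain ⟨w, hw⟩ := Function.ne_iff.1 hy0
  have : Nonempty V := ⟨w⟩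
  let z : V → ℝ := fun v => max (G.degree v) 1
  have hz : ∀ v, 0 < z v := fun v => zero_lt_one.trans_le (le_max_right _ _)
  have hz_of_pos : ∀ v, 0 < G.degree v → z v = G.degree v := fun v hv =>
    max_eq_left (by exact_mod_cast hv)
  obtain ⟨v, hv⟩ := Finite.exists_max fun v => y v / z v
  set c := y v / z v
  have hc : 0 < c := (div_pos ((hy w).lt_of_ne' hw) (hz w)).trans_le (hv w)
  have hyc : ∀ u, y u ≤ c * z u := fun u => (div_le_iff₀ (hz u)).1 (hv u)
  have hyv : y v = c * z v := (div_mul_cancel₀ _ (hz v).ne').symm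
  have hdeg : 0 < G.degree v := by
    by_contra! h0
    have hN : G.neighborFinset v = ∅ :=
      card_eq_zero.1 (by rw [card_neighborFinset_eq_degree]; omega)
    have h := hsub v
    rw [hN, Nat.le_zero.1 h0] at h
    simp only [Nat.cast_zero, zero_mul, sum_empty, add_zero] at h
    exact (mul_pos hlam (hyv ▸ mul_pos hc (hz v))).not_ge h
  have hnbrs : ∑ u ∈ G.neighborFinset v, y u ≤
      c * ∑ u ∈ G.neighborFinset v, (G.degree u : ℝ) := by
    rw [mul_sum]
    refine sum_le_sum fun u hu => ?_
    have hu := (G.degree_pos_iff_exists_adj u).2 ⟨v, ((G.mem_neighborFinset _ _).1 hu).symm⟩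
    simpa only [hz_of_pos u hu] using hyc u
  refine ⟨v, hdeg, ?_⟩
  have hd : (0 : ℝ) < G.degree v := by exact_mod_cast hdeg
  rw [← sub_le_iff_le_add', le_div_iff₀ hd]
  refine le_of_mul_le_mul_left ?_ hc
  have := hsub v
  rw [hyv, hz_of_pos v hdeg] at this
  linarith

lemma exists_le_degree_add_div_of_mem_spectrum [DecidableEq V] {lam : ℝ}
    (hlam : lam ∈ spectrum ℝ (signlessLaplacian G)) (hlam0 : 0 < lam) :
    ∃ v, 0 < G.degree v ∧
      lam ≤ G.degree v + (∑ u ∈ G.neighborFinset v, (G.degree u : ℝ)) / G.degree v := by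
  obtain ⟨x, hx0, hx⟩ := Matrix.exists_mulVec_eq_smul_of_mem_spectrum hlam
  refine exists_le_degree_add_div_of_subeigenvector G hlam0 (y := fun v => |x v|)
    (fun v => abs_nonneg (x v)) (fun h => hx0 (funext fun v => abs_eq_zero.1 (congrFun h v)))
    fun v => ?_
  have hv : lam * x v = G.degree v * x v + ∑ u ∈ G.neighborFinset v, x u := by
    rw [← signlessLaplacian_mulVec_apply, hx, Pi.smul_apply, smul_eq_mul]
  calc lam * |x v| = |G.degree v * x v + ∑ u ∈ G.neighborFinset v, x u| := by
        rw [← hv, abs_mul, abs_of_pos hlam0]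
    _ ≤ |G.degree v * x v| + |∑ u ∈ G.neighborFinset v, x u| := abs_add_le _ _
    _ ≤ G.degree v * |x v| + ∑ u ∈ G.neighborFinset v, |x u| := by
        rw [abs_mul, Nat.abs_cast]
        gcongr
        exact abs_sum_le_sum_abs _ _

lemma SimpleGraph.sum_degree_neighborFinset_le_card_edgeFinset [DecidableEq V] {v : V}
    (h : G.IsIndepSet (G.neighborSet v)) :
    ∑ u ∈ G.neighborFinset v, G.degree u ≤ #G.edgeFinset := by
  have hdisj : (G.neighborFinset v : Set V).PairwiseDisjoint fun u => G.incidenceFinset u := by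
    intro a ha b hb hab
    rw [Function.onFun, ← disjoint_coe, coe_incidenceFinset, coe_incidenceFinset,
      Set.disjoint_iff_inter_eq_empty]
    exact G.incidenceSet_inter_incidenceSet_of_not_adj
      (h (by simpa using ha) (by simpa using hb) hab) hab
  calc ∑ u ∈ G.neighborFinset v, G.degree u
      = #((G.neighborFinset v).biUnion fun u => G.incidenceFinset u) := by
        rw [card_biUnion hdisj]
        simp only [card_incidenceFinset_eq_degree]
    _ ≤ #G.edgeFinset := card_le_card (biUnion_subset.2 fun u _ => G.incidenceFinset_subset u)

end SignlessLaplacian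

/- If `e ≤ n * d`, then `e / n + n - (d + e / d) = (n - d) * (n * d - e) / (n * d) ≥ 0`;
otherwise `d ≤ e / n` and `S / d ≤ n`. -/
lemma add_div_le_div_add {d S e n : ℝ} (hd : 0 < d) (hdn : d ≤ n) (hSe : S ≤ e)
    (hSn : S ≤ n * d) : d + S / d ≤ e / n + n := by
  have hn : 0 < n := hd.trans_le hdn
  rw [add_div' _ _ _ hd.ne', div_add' _ _ _ hn.ne', div_le_div_iff₀ hd hn]
  rcases le_total e (n * d) with h | h
  · nlinarith [mul_nonneg (sub_nonneg.2 hdn) (sub_nonneg.2 h)]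
  · nlinarith

namespace CrossOnly

variable {m n : ℕ} {G : SimpleGraph (Fin m ⊕ Fin n)}

lemma isIndepSet_neighborSet (hG : CrossOnly G) (v : Fin m ⊕ Fin n) :
    G.IsIndepSet (G.neighborSet v) := by
  rintro (a | a) ha (b | b) hb - hab <;> rcases v with v | v <;>
    simp_all [hG.1, hG.2]

lemma degree_inl_le (hG : CrossOnly G) (a : Fin m) : G.degree (.inl a) ≤ n := by
  rw [← card_neighborFinset_eq_degree]
  calc #(G.neighborFinset (.inl a)) ≤ #(univ.map Function.Embedding.inr) := by
        refine card_le_card fun u hu => ?_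
        rcases u with b | b
        · exact absurd ((G.mem_neighborFinset _ _).1 hu) (hG.1 a b)
        · simp
    _ = n := by simp

lemma degree_inr_le (hG : CrossOnly G) (b : Fin n) : G.degree (.inr b) ≤ m := by
  rw [← card_neighborFinset_eq_degree]
  calc #(G.neighborFinset (.inr b)) ≤ #(univ.map Function.Embedding.inl) := by
        refine card_le_card fun u hu => ?_
        rcases u with a | a
        · simp
        · exact absurd ((G.mem_neighborFinset _ _).1 hu) (hG.2 b a)
    _ = m := by simp

end CrossOnly

lemma CrossOnly.degree_le {n : ℕ} {G : SimpleGraph (Fin n ⊕ Fin n)} (hG : CrossOnly G)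
    (v : Fin n ⊕ Fin n) : G.degree v ≤ n := by
  rcases v with a | b
  exacts [hG.degree_inl_le a, hG.degree_inr_le b]

/-- For a balanced bipartite graph `G` on `2n` vertices, `q(G) ≤ e(G)/n + n`. -/
theorem stmt_3 (n : ℕ) (G : SimpleGraph (Fin n ⊕ Fin n)) (hbip : CrossOnly G) :
    qSpec G ≤ (G.edgeFinset.card : ℝ) / n + n := by
  refine Real.sSup_le (fun lam hlam => ?_) (by positivity)
  rcases le_or_gt lam 0 with hlam0 | hlam0
  · exact hlam0.trans (by positivity)
  obtain ⟨v, hv, hlam_le⟩ := exists_le_degree_add_div_of_mem_spectrum G hlam hlam0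
  have hsum_le : ∑ u ∈ G.neighborFinset v, G.degree u ≤ n * G.degree v := by
    rw [← card_neighborFinset_eq_degree, mul_comm]
    exact sum_le_card_nsmul _ _ _ fun u _ => hbip.degree_le u
  refine hlam_le.trans (add_div_le_div_add (by exact_mod_cast hv) ?_ ?_ ?_)
  · exact_mod_cast hbip.degree_le v
  · exact_mod_cast G.sum_degree_neighborFinset_le_card_edgeFinset (hbip.isIndepSet_neighborSet v)
  · exact_mod_cast hsum_le
end

section
/- For n ≥ 3, the spectral radius ρ of the graph Q_n^1 satisfies ρ⁴ − (n² − 2n + 2)ρ² + 2(n−1)(n−2) = 0; explicitly ρ² = ((n² − 2n + 2) + √((n² − 2n + 2)² − 8(n−1)(n−2)))/2. -/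
open SimpleGraph

attribute [local instance] Classical.propDecidable

/-!
The adjacency matrix of `Q_n^1` is a blow-up `C.submatrix f f` of a `0/1` pattern `C` on four
vertex classes. For such a matrix `A * p(A) = (p(B) * C).submatrix f f` for every polynomial `p`,
where `B = C * diag(class sizes)` is the quotient matrix, and every eigenvector of `B` lifts to one
of `A`. Here `B` is annihilated by `x⁴ - (n² - 2n + 2) x² + 2(n - 1)(n - 2)`, so every eigenvalue
`μ` of `A` is `0` or a root of it, while every root is an eigenvalue of `B`. Hence `ρ² = λ`, the
larger root of the quadratic in `x²`.
-/

open Matrix Polynomial Finset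

section BlowUp

variable {V ι R : Type*} [Fintype V] [Fintype ι] [DecidableEq ι]

def fiberCard [Semiring R] (f : V → ι) (i : ι) : R := Fintype.card {v // f v = i}

theorem sum_comp_eq_sum_fiberCard_mul [CommSemiring R] (f : V → ι) (g : ι → R) :
    ∑ v, g (f v) = ∑ i, fiberCard f i * g i := by
  simp [← Fintype.sum_fiberwise' f g, fiberCard]

namespace Matrix

section CommSemiring

variable [CommSemiring R] (f : V → ι)

theorem submatrix_self_mul_submatrix_self (M N : Matrix ι ι R) :
    M.submatrix f f * N.submatrix f f = (M * diagonal (fiberCard f) * N).submatrix f f := by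
  ext x y
  rw [submatrix_apply, Matrix.mul_assoc, mul_apply, mul_apply]
  simp only [submatrix_apply, diagonal_mul]
  rw [sum_comp_eq_sum_fiberCard_mul f (fun i => M (f x) i * N i (f y))]
  exact sum_congr rfl fun i _ => by ring

theorem submatrix_self_mulVec_comp (M : Matrix ι ι R) (c : ι → R) :
    M.submatrix f f *ᵥ (c ∘ f) = ((M * diagonal (fiberCard f)) *ᵥ c) ∘ f := by
  ext x
  simp only [mulVec, dotProduct, submatrix_apply, Function.comp_apply, mul_diagonal]
  rw [sum_comp_eq_sum_fiberCard_mul f (fun i => M (f x) i * c i)]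
  exact sum_congr rfl fun i _ => by ring

variable [DecidableEq V]

theorem submatrix_self_pow_succ (M : Matrix ι ι R) (k : ℕ) :
    M.submatrix f f ^ (k + 1) = ((M * diagonal (fiberCard f)) ^ k * M).submatrix f f := by
  induction k with
  | zero => simp
  | succ k ih =>
    rw [pow_succ', ih, submatrix_self_mul_submatrix_self, pow_succ', Matrix.mul_assoc,
      Matrix.mul_assoc, Matrix.mul_assoc]

theorem submatrix_self_mul_aeval (M : Matrix ι ι R) (p : R[X]) :
    M.submatrix f f * aeval (M.submatrix f f) p
      = (aeval (M * diagonal (fiberCard f)) p * M).submatrix f f := by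
  induction p using Polynomial.induction_on' with
  | add p q hp hq => rw [map_add, map_add, Matrix.mul_add, hp, hq, Matrix.add_mul]; rfl
  | monomial k r =>
    simp only [aeval_monomial, ← Algebra.smul_def, Matrix.mul_smul, ← pow_succ',
      submatrix_self_pow_succ, Matrix.smul_mul]
    rfl

end CommSemiring

variable {K : Type*} [Field K] [DecidableEq V] (f : V → ι) (M : Matrix ι ι K)

theorem mul_eval_eq_zero_of_mem_spectrum_submatrix_self [Nonempty V] {q : K[X]}
    (hq : aeval (M * diagonal (fiberCard f)) q = 0) {μ : K}
    (hμ : μ ∈ spectrum K (M.submatrix f f)) : μ * q.eval μ = 0 := by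
  have := spectrum.subset_polynomial_aeval (M.submatrix f f) (X * q) ⟨μ, hμ, rfl⟩
  rw [map_mul, aeval_X, submatrix_self_mul_aeval, hq, Matrix.zero_mul] at this
  simpa [spectrum.zero_eq] using this

theorem mem_spectrum_submatrix_self_of_mulVec_eq_smul (hf : Function.Surjective f)
    {c : ι → K} (hc : c ≠ 0) {μ : K} (h : (M * diagonal (fiberCard f)) *ᵥ c = μ • c) :
    μ ∈ spectrum K (M.submatrix f f) := by
  rw [← spectrum_toLin']
  refine Module.End.hasEigenvalue_of_hasEigenvector (x := c ∘ f) ⟨?_, ?_⟩ |>.mem_spectrum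
  · rw [Module.End.mem_eigenspace_iff, toLin'_apply, submatrix_self_mulVec_comp, h]; rfl
  · exact fun h0 => hc (hf.injective_comp_right h0)

end Matrix

end BlowUp

theorem Fin.card_filter_not_val_lt (n m : ℕ) : #{i : Fin n | ¬ i.val < m} = n - m := by
  have := card_filter_add_card_filter_not (s := univ) (fun i : Fin n => i.val < m)
  rw [Fin.card_filter_val_lt, card_univ, Fintype.card_fin] at this
  omega

theorem le_of_sq_sub_mul_add_eq_zero {s c y z : ℝ} (hy : y ^ 2 - s * y + c = 0)
    (hz : z ^ 2 - s * z + c = 0) (hz_ge : s ≤ 2 * z) : y ≤ z := by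
  have : (y - z) * (y - (s - z)) = 0 := by linear_combination hy - hz
  rcases mul_eq_zero.1 this with h | h <;> linarith

-- The classes: the centre of `K_{1,n-2}`, the rest of the left side, the leaves of `K_{1,n-2}`,
-- the rest of the right side.
def qPart (n : ℕ) : Fin n ⊕ Fin n → Fin 4 :=
  Sum.elim (fun x => if x.val < 1 then 0 else 1) (fun y => if y.val < n - 2 then 2 else 3)

def qPattern : Matrix (Fin 4) (Fin 4) ℝ := !![0, 0, 1, 1; 0, 0, 1, 0; 1, 1, 0, 0; 1, 0, 0, 0]

def qQuotient (n : ℕ) : Matrix (Fin 4) (Fin 4) ℝ :=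
  !![0, 0, n - 2, 2; 0, 0, n - 2, 0; 1, n - 1, 0, 0; 1, 0, 0, 0]

-- Rows 3, 1 and 0 of `qQuotient n *ᵥ c = ρ • c` determine `c` up to scaling (chosen to avoid
-- division); row 2 is then the biquadratic equation for `ρ`.
def qEigenvector (n : ℕ) (ρ : ℝ) : Fin 4 → ℝ :=
  ![(n - 2) * ρ ^ 2, (n - 2) * (ρ ^ 2 - 2), ρ * (ρ ^ 2 - 2), (n - 2) * ρ]

theorem adjMatrix_Qgraph_one (n : ℕ) :
    (Qgraph n 1).adjMatrix ℝ = qPattern.submatrix (qPart n) (qPart n) := by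
  ext (x | x) (y | y) <;>
    simp only [Qgraph, qPart, qPattern, submatrix_apply, Sum.elim_inl, Sum.elim_inr] <;>
    split_ifs <;> simp_all <;> omega

theorem qPart_surjective {n : ℕ} (hn : 3 ≤ n) : Function.Surjective (qPart n) := by
  intro i
  fin_cases i
  · exact ⟨.inl ⟨0, by omega⟩, by simp [qPart]⟩
  · exact ⟨.inl ⟨1, by omega⟩, by simp [qPart]⟩
  · exact ⟨.inr ⟨0, by omega⟩, by simp [qPart]; omega⟩
  · exact ⟨.inr ⟨n - 1, by omega⟩, by simp [qPart]; omega⟩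

theorem card_fiber_qPart {n : ℕ} (hn : 2 ≤ n) (i : Fin 4) :
    Fintype.card {v // qPart n v = i} = ![1, n - 1, n - 2, 2] i := by
  rw [Fintype.card_congr Equiv.subtypeSum, Fintype.card_sum, Fintype.card_subtype,
    Fintype.card_subtype]
  fin_cases i <;>
    simp only [Fin.reduceFinMk, qPart, Sum.elim_inl, Sum.elim_inr, ite_eq_iff, Fin.reduceEq,
      and_true, and_false, or_false, false_or, filter_false, card_empty, Fin.card_filter_val_lt,
      Fin.card_filter_not_val_lt, Matrix.cons_val] <;>
    omega

theorem qPattern_mul_diagonal_fiberCard {n : ℕ} (hn : 2 ≤ n) :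
    qPattern * diagonal (fiberCard (qPart n)) = qQuotient n := by
  ext i j
  rw [mul_diagonal, fiberCard, card_fiber_qPart hn]
  fin_cases i <;> fin_cases j <;>
    simp [qPattern, qQuotient, Nat.cast_sub (by omega : 1 ≤ n), Nat.cast_sub hn]

theorem aeval_qQuotient (n : ℕ) :
    aeval (qQuotient n) (X ^ 4 - C ((n : ℝ) ^ 2 - 2 * n + 2) * X ^ 2
      + C (2 * ((n : ℝ) - 1) * (n - 2))) = 0 := by
  simp only [map_add, map_sub, map_mul, map_pow, aeval_X, aeval_C, algebraMap_eq_diagonal]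
  ext i j
  fin_cases i <;> fin_cases j <;> simp [qQuotient, pow_succ, mul_apply, Fin.sum_univ_four] <;>
    ring

theorem qQuotient_mulVec_qEigenvector (n : ℕ) {ρ : ℝ}
    (hρ : ρ ^ 4 - ((n : ℝ) ^ 2 - 2 * n + 2) * ρ ^ 2 + 2 * ((n : ℝ) - 1) * (n - 2) = 0) :
    qQuotient n *ᵥ qEigenvector n ρ = ρ • qEigenvector n ρ := by
  ext i
  fin_cases i <;> simp [qQuotient, qEigenvector, mulVec, dotProduct, Fin.sum_univ_four]
  · ring
  · ring
  · linear_combination -hρ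
  · ring

theorem mem_spectrum_adjMatrix_Qgraph_one {n : ℕ} (hn : 3 ≤ n) {ρ : ℝ}
    (hρ : ρ ^ 4 - ((n : ℝ) ^ 2 - 2 * n + 2) * ρ ^ 2 + 2 * ((n : ℝ) - 1) * (n - 2) = 0) :
    ρ ∈ spectrum ℝ ((Qgraph n 1).adjMatrix ℝ) := by
  have hn' : (3 : ℝ) ≤ n := by exact_mod_cast hn
  have hρ0 : ρ ≠ 0 := by
    rintro rfl
    nlinarith
  have hc : qEigenvector n ρ ≠ 0 := by
    refine Function.ne_iff.2 ⟨0, ?_⟩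
    have : (n : ℝ) - 2 ≠ 0 := by linarith
    simpa [qEigenvector, hρ0]
  rw [adjMatrix_Qgraph_one]
  refine mem_spectrum_submatrix_self_of_mulVec_eq_smul _ _ (qPart_surjective hn) hc ?_
  rw [qPattern_mul_diagonal_fiberCard (by omega)]
  exact qQuotient_mulVec_qEigenvector n hρ

theorem mul_eq_zero_of_mem_spectrum_adjMatrix_Qgraph_one {n : ℕ} (hn : 3 ≤ n) {μ : ℝ}
    (hμ : μ ∈ spectrum ℝ ((Qgraph n 1).adjMatrix ℝ)) :
    μ * (μ ^ 4 - ((n : ℝ) ^ 2 - 2 * n + 2) * μ ^ 2 + 2 * ((n : ℝ) - 1) * (n - 2)) = 0 := by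
  have : Nonempty (Fin n ⊕ Fin n) := ⟨.inl ⟨0, by omega⟩⟩
  rw [adjMatrix_Qgraph_one] at hμ
  have hq := aeval_qQuotient n
  rw [← qPattern_mul_diagonal_fiberCard (by omega)] at hq
  simpa using mul_eval_eq_zero_of_mem_spectrum_submatrix_self _ _ hq hμ

theorem isGreatest_spectrum_adjMatrix_Qgraph_one {n : ℕ} (hn : 3 ≤ n) {ρ : ℝ}
    (hρ_nonneg : 0 ≤ ρ)
    (hρ : ρ ^ 4 - ((n : ℝ) ^ 2 - 2 * n + 2) * ρ ^ 2 + 2 * ((n : ℝ) - 1) * (n - 2) = 0)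
    (hρ_ge : (n : ℝ) ^ 2 - 2 * n + 2 ≤ 2 * ρ ^ 2) :
    IsGreatest (spectrum ℝ ((Qgraph n 1).adjMatrix ℝ)) ρ := by
  refine ⟨mem_spectrum_adjMatrix_Qgraph_one hn hρ, fun μ hμ => ?_⟩
  rcases le_or_gt μ 0 with hμ0 | hμ0
  · exact hμ0.trans hρ_nonneg
  have hμ_root := (mul_eq_zero.1
    (mul_eq_zero_of_mem_spectrum_adjMatrix_Qgraph_one hn hμ)).resolve_left hμ0.ne'
  have hμ_sq : μ ^ 2 ≤ ρ ^ 2 :=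
    le_of_sq_sub_mul_add_eq_zero (c := 2 * ((n : ℝ) - 1) * (n - 2))
      (by linear_combination hμ_root) (by linear_combination hρ) hρ_ge
  exact (pow_le_pow_iff_left₀ hμ0.le hρ_nonneg two_ne_zero).1 hμ_sq

/-- For `n ≥ 3`, the spectral radius `ρ` of `Q_n^1` satisfies
`ρ⁴ - (n² - 2n + 2)ρ² + 2(n-1)(n-2) = 0`, and explicitly
`ρ² = ((n² - 2n + 2) + √((n² - 2n + 2)² - 8(n-1)(n-2)))/2`. -/
theorem stmt_8 (n : ℕ) (hn : 3 ≤ n) :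
    (specRad (Qgraph n 1)) ^ 4 - ((n : ℝ) ^ 2 - 2 * n + 2) * (specRad (Qgraph n 1)) ^ 2
        + 2 * ((n : ℝ) - 1) * ((n : ℝ) - 2) = 0 ∧
    (specRad (Qgraph n 1)) ^ 2 =
      (((n : ℝ) ^ 2 - 2 * n + 2) +
        Real.sqrt (((n : ℝ) ^ 2 - 2 * n + 2) ^ 2 - 8 * ((n : ℝ) - 1) * ((n : ℝ) - 2))) / 2 := by
  have hn' : (3 : ℝ) ≤ n := by exact_mod_cast hn
  have hdisc : 0 ≤ ((n : ℝ) ^ 2 - 2 * n + 2) ^ 2 - 8 * ((n : ℝ) - 1) * ((n : ℝ) - 2) := by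
    nlinarith [sq_nonneg ((n : ℝ) ^ 2 - 2 * n - 2)]
  obtain ⟨lam, hlam⟩ : ∃ lam, (((n : ℝ) ^ 2 - 2 * n + 2) +
      √(((n : ℝ) ^ 2 - 2 * n + 2) ^ 2 - 8 * ((n : ℝ) - 1) * ((n : ℝ) - 2))) / 2 = lam :=
    ⟨_, rfl⟩
  have hlam_root :
      lam ^ 2 - ((n : ℝ) ^ 2 - 2 * n + 2) * lam + 2 * ((n : ℝ) - 1) * (n - 2) = 0 := by
    rw [← hlam]
    linear_combination Real.sq_sqrt hdisc / 4
  have hlam_ge : (n : ℝ) ^ 2 - 2 * n + 2 ≤ 2 * lam := by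
    rw [← hlam]
    linarith [Real.sqrt_nonneg (((n : ℝ) ^ 2 - 2 * n + 2) ^ 2 - 8 * ((n : ℝ) - 1) * (n - 2))]
  have hsq : √lam ^ 2 = lam := Real.sq_sqrt (by nlinarith)
  have hρ_root : √lam ^ 4 - ((n : ℝ) ^ 2 - 2 * n + 2) * √lam ^ 2
      + 2 * ((n : ℝ) - 1) * (n - 2) = 0 := by
    linear_combination hlam_root + (√lam ^ 2 + lam - ((n : ℝ) ^ 2 - 2 * n + 2)) * hsq
  have hρ : specRad (Qgraph n 1) = √lam :=
    (isGreatest_spectrum_adjMatrix_Qgraph_one hn (Real.sqrt_nonneg _) hρ_root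
      (by rwa [hsq])).csSup_eq
  rw [hlam, hρ]
  exact ⟨hρ_root, hsq⟩
end

section
/- For n ≥ 4, the spectral radius of Q_n^1 is strictly less than n − 1, and for n = 3 it equals n − 1 = 2. -/
open SimpleGraph

attribute [local instance] Classical.propDecidable

/-! A nonzero eigenvalue `μ` of `Q_n^1` has an eigenvector whose sums `a, S, c, w` over the cells
`{inl 0}`, `{inl x | x ≠ 0}`, `{inr y | y < n - 2}`, `{inr y | n - 2 ≤ y}` of an equitable partition
satisfy the eigen-equations of its `4 × 4` quotient matrix, with `(c, w) ≠ 0`. Hence `μ²` is a root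
of `(t - n(n - 2))(t - 2) = 2(n - 2)`. For `n ≥ 4` no root satisfies `t ≥ (n - 1)²`; for `n = 3` the
roots are `t = 1, 4`, and `μ = 2` is realised by an explicit eigenvector. -/

open Finset Matrix

theorem Matrix.mem_spectrum_iff_exists_mulVec_eq_smul {ι K : Type*} [Fintype ι] [DecidableEq ι]
    [Field K] (A : Matrix ι ι K) (μ : K) :
    μ ∈ spectrum K A ↔ ∃ v ≠ 0, A *ᵥ v = μ • v := by
  rw [← Matrix.spectrum_toLin', ← Module.End.hasEigenvalue_iff_mem_spectrum]
  constructor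
  · intro h
    obtain ⟨v, hv⟩ := h.exists_hasEigenvector
    exact ⟨v, hv.2, Module.End.mem_eigenspace_iff.1 hv.1⟩
  · rintro ⟨v, hv0, hv⟩
    exact Module.End.hasEigenvalue_of_hasEigenvector ⟨Module.End.mem_eigenspace_iff.2 hv, hv0⟩

theorem specRad_lt_of_forall_lt {V : Type*} [Fintype V] [Nonempty V] [DecidableEq V]
    (G : SimpleGraph V) {r : ℝ} (h : ∀ μ ∈ spectrum ℝ (G.adjMatrix ℝ), μ < r) :
    specRad G < r :=
  ((Matrix.finite_spectrum _).csSup_lt_iff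
    ⟨_, (G.isHermitian_adjMatrix ℝ).eigenvalues_mem_spectrum_real (Classical.arbitrary V)⟩).2 h

section Qgraph

variable {n k : ℕ}

theorem Qgraph_adj_inl_inr (x y : Fin n) :
    (Qgraph n k).Adj (.inl x) (.inr y) ↔ x.val < k ∨ y.val < n - k - 1 := by
  simp [Qgraph]

theorem Qgraph_adj_inr_inl (x y : Fin n) :
    (Qgraph n k).Adj (.inr y) (.inl x) ↔ x.val < k ∨ y.val < n - k - 1 := by
  rw [adj_comm, Qgraph_adj_inl_inr]

theorem Qgraph_not_adj_inl_inl (x y : Fin n) : ¬ (Qgraph n k).Adj (.inl x) (.inl y) := by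
  simp [Qgraph]

theorem Qgraph_not_adj_inr_inr (x y : Fin n) : ¬ (Qgraph n k).Adj (.inr x) (.inr y) := by
  simp [Qgraph]

theorem Qgraph_adjMatrix_mulVec_inl {α : Type*} [NonAssocSemiring α] (v : Fin n ⊕ Fin n → α)
    (x : Fin n) :
    ((Qgraph n k).adjMatrix α *ᵥ v) (.inl x) =
      ∑ y with x.val < k ∨ y.val < n - k - 1, v (.inr y) := by
  simp [neighborFinset_eq_filter, sum_filter, Fintype.sum_sum_type, Qgraph_adj_inl_inr,
    Qgraph_not_adj_inl_inl]

theorem Qgraph_adjMatrix_mulVec_inr {α : Type*} [NonAssocSemiring α] (v : Fin n ⊕ Fin n → α)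
    (y : Fin n) :
    ((Qgraph n k).adjMatrix α *ᵥ v) (.inr y) =
      ∑ x with x.val < k ∨ y.val < n - k - 1, v (.inl x) := by
  simp [neighborFinset_eq_filter, sum_filter, Fintype.sum_sum_type, Qgraph_adj_inr_inl,
    Qgraph_not_adj_inr_inr]

end Qgraph

theorem quartic_eq_of_quotient_eqns {μ m a S c w : ℝ} (ha : μ * a = c + w)
    (hS : μ * S = (m - 1) * c) (hc : μ * c = (m - 2) * (a + S)) (hw : μ * w = 2 * a)
    (hcw : c ≠ 0 ∨ w ≠ 0) :
    (μ ^ 2 - m * (m - 2)) * (μ ^ 2 - 2) = 2 * (m - 2) := by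
  have hcw' : (μ ^ 2 - m * (m - 2)) * c = (m - 2) * w := by
    linear_combination μ * hc + (m - 2) * ha + (m - 2) * hS
  have hwc : (μ ^ 2 - 2) * w = 2 * c := by linear_combination μ * hw + 2 * ha
  rw [← sub_eq_zero]
  rcases hcw with hc0 | hw0
  · refine (mul_eq_zero.1 ?_).resolve_right hc0
    linear_combination (μ ^ 2 - 2) * hcw' + (m - 2) * hwc
  · refine (mul_eq_zero.1 ?_).resolve_right hw0
    linear_combination (μ ^ 2 - m * (m - 2)) * hwc + 2 * hcw'

theorem Qgraph_one_eigenvalue_quartic {n : ℕ} (hn : 2 ≤ n) {μ : ℝ}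
    (hμ : μ ∈ spectrum ℝ ((Qgraph n 1).adjMatrix ℝ)) (hμ0 : μ ≠ 0) :
    (μ ^ 2 - n * (n - 2)) * (μ ^ 2 - 2) = 2 * (n - 2) := by
  have : NeZero n := ⟨by omega⟩
  obtain ⟨v, hv0, hv⟩ := (mem_spectrum_iff_exists_mulVec_eq_smul _ μ).1 hμ
  set a := v (.inl 0)
  set S := ∑ x ∈ univ.erase 0, v (.inl x)
  set c := ∑ y with y.val < n - 2, v (.inr y)
  set w := ∑ y with ¬ y.val < n - 2, v (.inr y)
  have row i : μ * v i = ((Qgraph n 1).adjMatrix ℝ *ᵥ v) i := by rw [hv]; rfl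
  have row_inl x : μ * v (.inl x) = if x = 0 then c + w else c := by
    rw [row, Qgraph_adjMatrix_mulVec_inl, Nat.sub_sub]
    split_ifs with hx
    · simpa [hx] using (sum_filter_add_sum_filter_not _ _ _).symm
    · simp [Fin.val_eq_zero_iff, hx, c]
  have row_inr y : μ * v (.inr y) = if y.val < n - 2 then a + S else a := by
    rw [row, Qgraph_adjMatrix_mulVec_inr, Nat.sub_sub]
    split_ifs with hy
    · simp [hy, a, S]
    · simp [Fin.val_eq_zero_iff, hy, a, filter_eq']
  have hS : μ * S = (n - 1) * c := by
    rw [mul_sum, sum_congr rfl fun x hx => (row_inl x).trans (if_neg (ne_of_mem_erase hx)),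
      sum_const, nsmul_eq_mul, card_erase_of_mem (mem_univ _), card_univ, Fintype.card_fin,
      Nat.cast_pred (by omega)]
  have hc : μ * c = (n - 2) * (a + S) := by
    rw [mul_sum, sum_congr rfl fun y hy => (row_inr y).trans (if_pos (mem_filter.1 hy).2),
      sum_const, nsmul_eq_mul, Fin.card_filter_val_lt, min_eq_right (by omega),
      Nat.cast_sub hn, Nat.cast_two]
  have hw : μ * w = 2 * a := by
    rw [mul_sum, sum_congr rfl fun y hy => (row_inr y).trans (if_neg (mem_filter.1 hy).2),
      sum_const, nsmul_eq_mul, filter_not, card_sdiff_of_subset (filter_subset _ _), card_univ,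
      Fintype.card_fin, Fin.card_filter_val_lt, min_eq_right (by omega), Nat.sub_sub_self hn,
      Nat.cast_two]
  have ha : μ * a = c + w := (row_inl 0).trans (if_pos rfl)
  refine quartic_eq_of_quotient_eqns ha hS hc hw ?_
  by_contra! hcw
  have ha0 : a = 0 := by simpa [hcw.1, hcw.2, hμ0] using ha
  have hS0 : S = 0 := by simpa [hcw.1, hμ0] using hS
  refine hv0 (funext fun i => mul_left_cancel₀ hμ0 ?_)
  rcases i with x | y
  · simp [row_inl, hcw.1, hcw.2]
  · simp [row_inr, ha0, hS0]

theorem eigenvalue_le_two_of_mem_spectrum_Qgraph_three_one {μ : ℝ}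
    (hμ : μ ∈ spectrum ℝ ((Qgraph 3 1).adjMatrix ℝ)) : μ ≤ 2 := by
  rcases eq_or_ne μ 0 with rfl | hμ0
  · norm_num
  have hq := Qgraph_one_eigenvalue_quartic (by norm_num) hμ hμ0
  norm_num at hq
  by_contra! h2
  have h4 : 4 < μ ^ 2 := by nlinarith
  nlinarith

theorem two_mem_spectrum_Qgraph_three_one : (2 : ℝ) ∈ spectrum ℝ ((Qgraph 3 1).adjMatrix ℝ) := by
  refine (mem_spectrum_iff_exists_mulVec_eq_smul _ _).2
    ⟨Sum.elim ![2, 1, 1] ![2, 1, 1], fun h => by simpa using congrFun h (.inl 0), ?_⟩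
  funext i
  rcases i with x | y
  · rw [Qgraph_adjMatrix_mulVec_inl]
    fin_cases x <;> norm_num [Fin.sum_univ_three, sum_filter, cons_val_two]
  · rw [Qgraph_adjMatrix_mulVec_inr]
    fin_cases y <;> norm_num [Fin.sum_univ_three, sum_filter, cons_val_two]

/-- For `n ≥ 4`, `ρ(Q_n^1) < n - 1`, and for `n = 3`, `ρ(Q_n^1) = n - 1 = 2`. -/
theorem stmt_9 (n : ℕ) :
    (4 ≤ n → specRad (Qgraph n 1) < (n : ℝ) - 1) ∧
    (n = 3 → specRad (Qgraph n 1) = 2) := by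
  constructor
  · intro hn
    have hn' : (4 : ℝ) ≤ n := by exact_mod_cast hn
    have : Nonempty (Fin n ⊕ Fin n) := ⟨.inl ⟨0, by omega⟩⟩
    refine specRad_lt_of_forall_lt _ fun μ hμ => ?_
    by_contra! hμn
    have hq := Qgraph_one_eigenvalue_quartic (by omega) hμ (by linarith)
    have hsq : (n - 1 : ℝ) ^ 2 ≤ μ ^ 2 := pow_le_pow_left₀ (by linarith) hμn 2
    have h1 : 1 ≤ μ ^ 2 - n * (n - 2) := by linarith
    have h2 : 2 * (n - 2) < μ ^ 2 - 2 := by nlinarith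
    nlinarith
  · rintro rfl
    exact IsGreatest.csSup_eq ⟨two_mem_spectrum_Qgraph_three_one,
      fun μ hμ => eigenvalue_le_two_of_mem_spectrum_Qgraph_three_one hμ⟩
end

section
/- A balanced bipartite graph G is traceable if and only if its bipartite closure cl_B(G) is traceable. -/
open SimpleGraph

attribute [local instance] Classical.propDecidable

/-- A balanced bipartite graph `G` on `2n` vertices is B-closed if every two nonadjacent
vertices in distinct parts have degree sum at most `n`. -/
def IsBClosed {n : ℕ} (G : SimpleGraph (Fin n ⊕ Fin n)) : Prop :=
  ∀ x y : Fin n, ¬ G.Adj (Sum.inl x) (Sum.inr y) →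
    G.degree (Sum.inl x) + G.degree (Sum.inr y) ≤ n

/-- `H` is the bipartite closure of `G`: the smallest B-closed bipartite supergraph of `G`. -/
def IsBClosure {n : ℕ} (G H : SimpleGraph (Fin n ⊕ Fin n)) : Prop :=
  G ≤ H ∧ CrossOnly H ∧ IsBClosed H ∧
    ∀ H' : SimpleGraph (Fin n ⊕ Fin n), G ≤ H' → CrossOnly H' → IsBClosed H' → H ≤ H'

/-!
Let `a`, `b` lie in different colour classes, with `deg a + deg b > n`, and suppose `G + ab` has a
Hamilton path `v₀ v₁ … v_{2n-1}`; if it avoids `ab` we are done, otherwise orient it so that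
`a = v_k`, `b = v_{k+1}`. If `b ~ v₀`, or `a ~ vᵢ` and `b ~ v_{i+1}` for some `i`, reversing the
block of the path between the edge `v_k v_{k+1}` and that neighbour gives a Hamilton path of `G`.
Otherwise the position sets `{i | a ~ vᵢ}` and `{i | b ~ v_{i+1}}` are disjoint, and both consist
of positions of vertices in the colour class of `b`, so `deg a + deg b ≤ n`.

Hence adding an edge of the closure never makes a non-traceable graph traceable. A maximal graph
between `G` and `cl_B(G)` whose traceability implies that of `G` is therefore B-closed, so it is
the closure itself.
-/

open Finset

variable {V : Type*}

namespace SimpleGraph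

theorem IsTraceable.mono {G G' : SimpleGraph V} (h : G ≤ G') (hG : G.IsTraceable) :
    G'.IsTraceable := by
  obtain ⟨u, v, p, hp⟩ := hG
  exact ⟨u, v, p.mapLe h, hp.map (Hom.ofLE h) Function.bijective_id⟩

variable [Fintype V] {G : SimpleGraph V}

structure IsHamiltonianSeq (G : SimpleGraph V) (v : ℕ → V) : Prop where
  bijOn : Set.BijOn v (Set.Iio (Fintype.card V)) Set.univ
  adj : ∀ i, i + 1 < Fintype.card V → G.Adj (v i) (v (i + 1))

theorem isTraceable_iff_exists_isHamiltonianSeq [Nonempty V] :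
    G.IsTraceable ↔ ∃ v, G.IsHamiltonianSeq v := by
  constructor
  · rintro ⟨u, w, p, hp⟩
    have hlen := hp.length_eq
    have hpos := Fintype.card_pos (α := V)
    refine ⟨p.getVert, ⟨⟨fun _ _ => Set.mem_univ _, ?_, fun x _ => ?_⟩,
      fun i hi => p.adj_getVert_succ (by omega)⟩⟩
    · exact hp.isPath.getVert_injOn.mono fun i (hi : i < _) => show i ≤ p.length by omega
    · obtain ⟨i, hi, hle⟩ := Walk.mem_support_iff_exists_getVert.1 (hp.mem_support x)
      exact ⟨i, show i < _ by omega, hi⟩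
  · rintro ⟨v, hv⟩
    set l := List.ofFn fun i : Fin (Fintype.card V) => v i
    have hne : l ≠ [] := by simp [l, Fintype.card_ne_zero]
    have hchain : l.IsChain G.Adj := List.isChain_ofFn.2 fun i hi => hv.adj i hi
    have hnodup : l.Nodup := List.nodup_ofFn.2 fun i j h => Fin.ext (hv.bijOn.injOn i.2 j.2 h)
    refine ⟨_, _, Walk.ofSupport l hne hchain, Walk.IsPath.isHamiltonian_of_mem ?_ fun x => ?_⟩
    · rw [Walk.isPath_def, Walk.support_ofSupport]
      exact hnodup
    · obtain ⟨i, hi, rfl⟩ := hv.bijOn.surjOn (Set.mem_univ x)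
      rw [Walk.support_ofSupport, List.mem_ofFn]
      exact ⟨⟨i, hi⟩, rfl⟩

def segmentReverse (p q i : ℕ) : ℕ := if p ≤ i ∧ i ≤ q then p + q - i else i

theorem segmentReverse_of_le {p q i : ℕ} (hp : p ≤ i) (hq : i ≤ q) :
    segmentReverse p q i = p + q - i :=
  if_pos ⟨hp, hq⟩

theorem segmentReverse_involutive (p q : ℕ) : Function.Involutive (segmentReverse p q) := by
  intro i
  unfold segmentReverse
  split_ifs <;> omega

theorem bijOn_segmentReverse {p q N : ℕ} (hq : q < N) :
    Set.BijOn (segmentReverse p q) (Set.Iio N) (Set.Iio N) := by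
  have hmaps : Set.MapsTo (segmentReverse p q) (Set.Iio N) (Set.Iio N) := by
    intro i (hi : i < N)
    show segmentReverse p q i < N
    unfold segmentReverse
    split_ifs <;> omega
  have hinv := segmentReverse_involutive p q
  exact Set.InvOn.bijOn ⟨fun i _ => hinv i, fun i _ => hinv i⟩ hmaps hmaps

/-- `v` may fail to be a path only at the step from `k` to `k + 1`; reversing a block that ends at
`k` or starts at `k + 1` drops that step in favour of the two junctions `hp_adj` and `hq_adj`. -/
theorem isHamiltonianSeq_comp_segmentReverse {v : ℕ → V} {k p q : ℕ}
    (hv : Set.BijOn v (Set.Iio (Fintype.card V)) Set.univ)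
    (hadj : ∀ i, i + 1 < Fintype.card V → i ≠ k → G.Adj (v i) (v (i + 1)))
    (hpq : p ≤ q) (hq : q < Fintype.card V) (hk : q = k ∨ p = k + 1)
    (hp_adj : 0 < p → G.Adj (v (p - 1)) (v q))
    (hq_adj : q + 1 < Fintype.card V → G.Adj (v p) (v (q + 1))) :
    G.IsHamiltonianSeq (v ∘ segmentReverse p q) := by
  refine ⟨hv.comp (bijOn_segmentReverse hq), fun i hi => ?_⟩
  simp only [Function.comp, segmentReverse]
  split_ifs with h₁ h₂ h₂
  · have := (hadj (p + q - (i + 1)) (by omega) (by omega)).symm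
    rwa [show p + q - (i + 1) + 1 = p + q - i by omega] at this
  · obtain rfl : i = q := by omega
    rw [Nat.add_sub_cancel]
    exact hq_adj hi
  · obtain rfl : p = i + 1 := by omega
    simpa [show i + 1 + q - (i + 1) = q by omega] using hp_adj (by omega)
  · exact hadj i hi (by omega)

theorem IsHamiltonianSeq.comp_segmentReverse_zero [Nonempty V] {v : ℕ → V}
    (hv : G.IsHamiltonianSeq v) :
    G.IsHamiltonianSeq (v ∘ segmentReverse 0 (Fintype.card V - 1)) :=
  isHamiltonianSeq_comp_segmentReverse hv.bijOn (k := Fintype.card V - 1)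
    (fun i hi _ => hv.adj i hi) (Nat.zero_le _) (by have := Fintype.card_pos (α := V); omega)
    (Or.inl rfl) (fun h => absurd h (lt_irrefl 0)) (fun h => by omega)

theorem IsHamiltonianSeq.adj_of_sup_edge {a b : V} {v : ℕ → V} {k : ℕ}
    (hv : (G ⊔ edge a b).IsHamiltonianSeq v) (hk : k + 1 < Fintype.card V) (hka : v k = a)
    (hkb : v (k + 1) = b) (i : ℕ) (hi : i + 1 < Fintype.card V) (hik : i ≠ k) :
    G.Adj (v i) (v (i + 1)) := by
  have hinj : ∀ {i j}, i < Fintype.card V → j < Fintype.card V → v i = v j → i = j :=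
    fun hi hj h => hv.bijOn.injOn hi hj h
  rcases (sup_adj ..).1 (hv.adj i hi) with h | h
  · exact h
  rcases ((edge_adj ..).1 h).1 with ⟨h₁, -⟩ | ⟨h₁, h₂⟩
  · exact absurd (hinj (by omega) (by omega) (h₁.trans hka.symm)) hik
  · have := hinj (by omega) hk (h₁.trans hkb.symm)
    have := hinj hi (by omega) (h₂.trans hka.symm)
    omega

theorem card_filter_range_eq_of_bijOn {v : ℕ → V}
    (hv : Set.BijOn v (Set.Iio (Fintype.card V)) Set.univ) (P : V → Prop) [DecidablePred P] :
    #{i ∈ range (Fintype.card V) | P (v i)} = #{w | P w} := by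
  refine card_nbij v (fun i hi => ?_) (hv.injOn.mono fun i hi => ?_) (fun w hw => ?_)
  · simp only [mem_coe, mem_filter, mem_range, mem_univ, true_and] at hi ⊢
    exact hi.2
  · simp only [mem_coe, mem_filter, mem_range] at hi
    exact hi.1
  · obtain ⟨i, hi, rfl⟩ := hv.surjOn (Set.mem_univ w)
    simp only [mem_coe, mem_filter, mem_univ, true_and] at hw
    exact ⟨i, by simp only [mem_coe, mem_filter, mem_range]; exact ⟨hi, hw⟩, rfl⟩

theorem degree_add_degree_le_of_not_adj (c : G.Coloring Bool) {v : ℕ → V} {k : ℕ} {a b : V}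
    (hv : Set.BijOn v (Set.Iio (Fintype.card V)) Set.univ)
    (hadj : ∀ i, i + 1 < Fintype.card V → i ≠ k → G.Adj (v i) (v (i + 1)))
    (hkb : v (k + 1) = b) (hab : c a ≠ c b) (hb₀ : ¬ G.Adj b (v 0))
    (hnot : ∀ i, i + 1 < Fintype.card V → G.Adj a (v i) → ¬ G.Adj b (v (i + 1))) :
    G.degree a + G.degree b ≤ #{w | c w = c b} := by
  have hbool : ∀ x y z : Bool, x ≠ y → y ≠ z → x = z := by decide
  set A := {i ∈ range (Fintype.card V) | G.Adj a (v i)}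
  set B := {i ∈ range (Fintype.card V) | i + 1 < Fintype.card V ∧ G.Adj b (v (i + 1))}
  set S := {i ∈ range (Fintype.card V) | c (v i) = c b}
  have hdeg : ∀ u, #{i ∈ range (Fintype.card V) | G.Adj u (v i)} = G.degree u := fun u => by
    rw [card_filter_range_eq_of_bijOn hv (G.Adj u), ← card_neighborFinset_eq_degree,
      neighborFinset_eq_filter]
  have hB : #B = #{i ∈ range (Fintype.card V) | G.Adj b (v i)} := by
    refine card_nbij (· + 1) (fun i hi => ?_) (fun i _ j _ h => by simpa using h) (fun j hj => ?_)
    · simp only [mem_coe, mem_filter, mem_range, B] at hi ⊢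
      exact hi.2
    · simp only [mem_coe, mem_filter, mem_range] at hj
      obtain ⟨j, rfl⟩ : ∃ j', j = j' + 1 :=
        Nat.exists_eq_add_one.2 (Nat.pos_of_ne_zero fun h => hb₀ (h ▸ hj.2))
      exact ⟨j, by simp only [mem_coe, mem_filter, mem_range, B]; exact ⟨by omega, hj⟩, rfl⟩
  have hAS : A ⊆ S := fun i hi => by
    simp only [A, S, mem_filter] at hi ⊢
    exact ⟨hi.1, hbool _ _ _ (c.valid hi.2).symm hab⟩
  have hBS : B ⊆ S := fun i hi => by
    simp only [B, S, mem_filter] at hi ⊢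
    obtain ⟨hiN, hi, hbi⟩ := hi
    have hik : i ≠ k := by rintro rfl; exact G.irrefl (hkb ▸ hbi)
    exact ⟨hiN, hbool _ _ _ (c.valid (hadj i hi hik)) (c.valid hbi).symm⟩
  have hdisj : Disjoint A B := Finset.disjoint_left.2 fun i hiA hiB => by
    simp only [A, B, mem_filter] at hiA hiB
    exact hnot i hiB.2.1 hiA.2 hiB.2.2
  calc G.degree a + G.degree b = #(A ∪ B) := by
        rw [card_union_of_disjoint hdisj, hB, hdeg, hdeg]
    _ ≤ #S := card_le_card (union_subset hAS hBS)
    _ = #{w | c w = c b} := card_filter_range_eq_of_bijOn hv (fun w => c w = c b)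

theorem isTraceable_of_lt_degree_add_degree (c : G.Coloring Bool) {v : ℕ → V} {k : ℕ} {a b : V}
    (hv : Set.BijOn v (Set.Iio (Fintype.card V)) Set.univ)
    (hadj : ∀ i, i + 1 < Fintype.card V → i ≠ k → G.Adj (v i) (v (i + 1)))
    (hk : k + 1 < Fintype.card V) (hka : v k = a) (hkb : v (k + 1) = b) (hab : c a ≠ c b)
    (hdeg : #{w | c w = c b} < G.degree a + G.degree b) : G.IsTraceable := by
  have : Nonempty V := ⟨a⟩
  rw [isTraceable_iff_exists_isHamiltonianSeq]
  by_cases hb₀ : G.Adj b (v 0)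
  · exact ⟨_, isHamiltonianSeq_comp_segmentReverse hv hadj (p := 0) (Nat.zero_le k) (by omega)
      (Or.inl rfl) (fun h => absurd h (lt_irrefl 0)) fun _ => hkb ▸ hb₀.symm⟩
  obtain ⟨i, hi, hai, hbi⟩ :
      ∃ i, i + 1 < Fintype.card V ∧ G.Adj a (v i) ∧ G.Adj b (v (i + 1)) := by
    by_contra! h
    exact (degree_add_degree_le_of_not_adj c hv hadj hkb hab hb₀ h).not_gt hdeg
  rcases lt_trichotomy i k with hik | rfl | hik
  · refine ⟨_, isHamiltonianSeq_comp_segmentReverse hv hadj (p := i + 1) (q := k) (by omega)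
      (by omega) (Or.inl rfl) (fun _ => ?_) fun _ => hkb ▸ hbi.symm⟩
    simpa [hka] using hai.symm
  · exact absurd (hka ▸ hai) G.irrefl
  · refine ⟨_, isHamiltonianSeq_comp_segmentReverse hv hadj (p := k + 1) (q := i) (by omega)
      (by omega) (Or.inr rfl) (fun _ => ?_) fun _ => hkb ▸ hbi⟩
    simpa [hka] using hai

theorem IsTraceable.of_sup_edge (c : G.Coloring Bool) {a b : V} (hab : c a ≠ c b)
    (hdeg : #{w | c w = c b} < G.degree a + G.degree b) (h : (G ⊔ edge a b).IsTraceable) :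
    G.IsTraceable := by
  have : Nonempty V := ⟨a⟩
  obtain ⟨v, hv⟩ := isTraceable_iff_exists_isHamiltonianSeq.1 h
  by_cases hG : ∀ i, i + 1 < Fintype.card V → G.Adj (v i) (v (i + 1))
  · exact isTraceable_iff_exists_isHamiltonianSeq.2 ⟨v, hv.bijOn, hG⟩
  obtain ⟨w, k, hw, hk, hka, hkb⟩ : ∃ w k, (G ⊔ edge a b).IsHamiltonianSeq w ∧
      k + 1 < Fintype.card V ∧ w k = a ∧ w (k + 1) = b := by
    push Not at hG
    obtain ⟨i, hi, hnadj⟩ := hG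
    rcases (sup_adj ..).1 (hv.adj i hi) with h | h
    · exact absurd h hnadj
    rcases ((edge_adj ..).1 h).1 with ⟨h₁, h₂⟩ | ⟨h₁, h₂⟩
    · exact ⟨v, i, hv, hi, h₁, h₂⟩
    · refine ⟨_, Fintype.card V - 2 - i, hv.comp_segmentReverse_zero, by omega, ?_, ?_⟩
      · rw [Function.comp_apply, segmentReverse_of_le (by omega) (by omega), ← h₂]
        congr 1
        omega
      · rw [Function.comp_apply, segmentReverse_of_le (by omega) (by omega), ← h₁]
        congr 1
        omega
  exact isTraceable_of_lt_degree_add_degree c hw.bijOn (hw.adj_of_sup_edge hk hka hkb) hk hka hkb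
    hab hdeg

end SimpleGraph

def CrossOnly.coloring {m n : ℕ} {G : SimpleGraph (Fin m ⊕ Fin n)} (hG : CrossOnly G) :
    G.Coloring Bool :=
  Coloring.mk Sum.isLeft fun {u v} huv => by
    rcases u with x | x <;> rcases v with y | y
    · exact absurd huv (hG.1 x y)
    · simp
    · simp
    · exact absurd huv (hG.2 x y)

@[simp]
theorem CrossOnly.coloring_apply {m n : ℕ} {G : SimpleGraph (Fin m ⊕ Fin n)} (hG : CrossOnly G)
    (w : Fin m ⊕ Fin n) : hG.coloring w = w.isLeft :=
  rfl

theorem CrossOnly.of_le {m n : ℕ} {G H : SimpleGraph (Fin m ⊕ Fin n)} (hH : CrossOnly H)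
    (hGH : G ≤ H) : CrossOnly G :=
  ⟨fun x y h => hH.1 x y (hGH h), fun x y h => hH.2 x y (hGH h)⟩

theorem card_filter_isRight (n : ℕ) : #{w : Fin n ⊕ Fin n | w.isRight} = n := by
  rw [show ({w | w.isRight} : Finset (Fin n ⊕ Fin n)) = univ.map .inr by
    ext w; cases w <;> simp]
  simp

theorem IsBClosure.adj_of_lt_degree_add_degree {n : ℕ} {G H K : SimpleGraph (Fin n ⊕ Fin n)}
    (hcl : IsBClosure G H) (hKH : K ≤ H) {x y : Fin n}
    (hdeg : n < K.degree (.inl x) + K.degree (.inr y)) : H.Adj (.inl x) (.inr y) := by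
  by_contra h
  have := hcl.2.2.1 x y h
  have := degree_le_of_le (v := .inl x) hKH
  have := degree_le_of_le (v := .inr y) hKH
  omega

theorem stmt_11_general (n : ℕ) (G H : SimpleGraph (Fin n ⊕ Fin n))
    (hcl : IsBClosure G H) :
    G.IsTraceable ↔ H.IsTraceable := by
  refine ⟨fun h => h.mono hcl.1, fun hH => ?_⟩
  obtain ⟨K, ⟨hGK, hKH, hK⟩, hmax⟩ := (Set.toFinite
    {K | G ≤ K ∧ K ≤ H ∧ (K.IsTraceable → G.IsTraceable)}).exists_maximal ⟨G, le_rfl, hcl.1, id⟩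
  have hKcross := hcl.2.1.of_le hKH
  suffices hclosed : IsBClosed K from hK (hH.mono (hcl.2.2.2 K hGK hKcross hclosed))
  intro x y hxy
  by_contra! hdeg
  have hH_adj := hcl.adj_of_lt_degree_add_degree hKH hdeg
  refine (lt_sup_edge _ _ _ Sum.inl_ne_inr hxy).not_ge (hmax ⟨le_sup_of_le_left hGK,
    sup_le hKH ((edge_le_iff _).2 (.inr hH_adj)), fun h => hK ?_⟩ le_sup_left)
  refine h.of_sup_edge hKcross.coloring (by simp) ?_
  simpa [card_filter_isRight] using hdeg

/-- A balanced bipartite graph is traceable iff its bipartite closure is traceable. -/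
theorem stmt_11 (n : ℕ) (G H : SimpleGraph (Fin n ⊕ Fin n)) (hbip : CrossOnly G)
    (hcl : IsBClosure G H) :
    G.IsTraceable ↔ H.IsTraceable :=
  stmt_11_general n G H hcl
end

section
/- Let G be a B-closed balanced bipartite graph on 2n vertices with n ≥ 2k+3 for some k ≥ 1. If e(G) > n(n−k−2) + (k+2)², then G contains a complete bipartite subgraph on 2n−k−1 vertices. Furthermore, if δ(G) ≥ k, then K_{n,n−k−1} ⊆ G, or k = 1 and K_{n−1,n−1} ⊆ G. -/
open SimpleGraph

attribute [local instance] Classical.propDecidable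

/-- `G` contains a complete bipartite subgraph `K_{a,b}` (in either orientation, respecting
the bipartition). -/
def HasCompleteBipSub {m n : ℕ} (G : SimpleGraph (Fin m ⊕ Fin n)) (a b : ℕ) : Prop :=
  ∃ (s : Finset (Fin m)) (t : Finset (Fin n)),
    (s.card = a ∧ t.card = b ∨ s.card = b ∧ t.card = a) ∧
    ∀ x ∈ s, ∀ y ∈ t, G.Adj (Sum.inl x) (Sum.inr y)

section StmtTwelveAux

variable {n : ℕ} (G : SimpleGraph (Fin n ⊕ Fin n))

private noncomputable def stmt12rH (x : Fin n) : ℕ :=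
  ∑ y : Fin n, if ¬ G.Adj (Sum.inl x) (Sum.inr y) then 1 else 0

private noncomputable def stmt12cH (y : Fin n) : ℕ :=
  ∑ x : Fin n, if ¬ G.Adj (Sum.inl x) (Sum.inr y) then 1 else 0

private lemma stmt12degl (hbip : CrossOnly G) (x : Fin n) :
    G.degree (Sum.inl x) = ∑ y : Fin n, if G.Adj (Sum.inl x) (Sum.inr y) then 1 else 0 := by
  classical
  have h1 : G.neighborFinset (Sum.inl x) = Finset.univ.filter (fun w => G.Adj (Sum.inl x) w) := by
    ext w; simp
  rw [SimpleGraph.degree, h1, Finset.card_filter, Fintype.sum_sum_type]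
  simp [hbip.1 x]

private lemma stmt12degr (hbip : CrossOnly G) (y : Fin n) :
    G.degree (Sum.inr y) = ∑ x : Fin n, if G.Adj (Sum.inl x) (Sum.inr y) then 1 else 0 := by
  classical
  have h1 : G.neighborFinset (Sum.inr y) = Finset.univ.filter (fun w => G.Adj (Sum.inr y) w) := by
    ext w; simp
  rw [SimpleGraph.degree, h1, Finset.card_filter, Fintype.sum_sum_type]
  simp only [G.adj_comm]
  simp [hbip.2 y, fun x => G.adj_comm (Sum.inr y) (Sum.inl x)]

private lemma stmt12rowsum (hbip : CrossOnly G) (x : Fin n) :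
    G.degree (Sum.inl x) + stmt12rH G x = n := by
  rw [stmt12degl G hbip x, stmt12rH, ← Finset.sum_add_distrib]
  rw [Finset.sum_congr rfl (fun y _ => by
    by_cases h : G.Adj (Sum.inl x) (Sum.inr y) <;> simp [h] : ∀ y ∈ Finset.univ, _ = 1)]
  simp

private lemma stmt12colsum (hbip : CrossOnly G) (y : Fin n) :
    G.degree (Sum.inr y) + stmt12cH G y = n := by
  rw [stmt12degr G hbip y, stmt12cH, ← Finset.sum_add_distrib]
  rw [Finset.sum_congr rfl (fun x _ => by
    by_cases h : G.Adj (Sum.inl x) (Sum.inr y) <;> simp [h] : ∀ x ∈ Finset.univ, _ = 1)]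
  simp

private lemma stmt12edgecount (hbip : CrossOnly G) :
    G.edgeFinset.card = ∑ x : Fin n, ∑ y : Fin n,
      if G.Adj (Sum.inl x) (Sum.inr y) then 1 else 0 := by
  classical
  have h2 := G.sum_degrees_eq_twice_card_edges
  rw [Fintype.sum_sum_type] at h2
  have h3 : ∑ y : Fin n, G.degree (Sum.inr y)
      = ∑ x : Fin n, ∑ y : Fin n, if G.Adj (Sum.inl x) (Sum.inr y) then 1 else 0 := by
    simp_rw [stmt12degr G hbip]
    exact Finset.sum_comm
  have h4 : ∑ x : Fin n, G.degree (Sum.inl x)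
      = ∑ x : Fin n, ∑ y : Fin n, if G.Adj (Sum.inl x) (Sum.inr y) then 1 else 0 := by
    simp_rw [stmt12degl G hbip]
  rw [h3, h4] at h2
  omega

private lemma stmt12nomatch {k : ℕ} (hbip : CrossOnly G)
    (hcl : IsBClosed G) (hn : 2 * k + 3 ≤ n)
    (he : n * (n - k - 2) + (k + 2) ^ 2 < G.edgeFinset.card)
    (A : Finset (Fin n)) (g : Fin n → Fin n) (hA : A.card = k + 2)
    (hinj : ∀ x ∈ A, ∀ y ∈ A, g x = g y → x = y)
    (hna : ∀ x ∈ A, ¬ G.Adj (Sum.inl x) (Sum.inr (g x))) : False := by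
  classical
  have hrH : ∀ x, stmt12rH G x
      = ∑ y : Fin n, if ¬ G.Adj (Sum.inl x) (Sum.inr y) then 1 else 0 := fun _ => rfl
  have hcH : ∀ y, stmt12cH G y
      = ∑ x : Fin n, if ¬ G.Adj (Sum.inl x) (Sum.inr y) then 1 else 0 := fun _ => rfl
  have hrow := stmt12rowsum G hbip
  have hcol := stmt12colsum G hbip
  have hE := stmt12edgecount G hbip
  set B := A.image g with hBdef
  have hBcard : B.card ≤ k + 2 := hA ▸ Finset.card_image_le
  have hcntA : (∑ x : Fin n, ∑ y : Fin n,
      if (¬ G.Adj (Sum.inl x) (Sum.inr y)) ∧ x ∈ A then 1 else 0)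
      = ∑ x ∈ A, stmt12rH G x := by
    have h1 : ∀ x : Fin n,
        (∑ y : Fin n, if (¬ G.Adj (Sum.inl x) (Sum.inr y)) ∧ x ∈ A then 1 else 0)
        = if x ∈ A then stmt12rH G x else 0 := by
      intro x; by_cases hx : x ∈ A <;> simp [hx, hrH]
    rw [Finset.sum_congr rfl fun x _ => h1 x, Finset.sum_ite_mem, Finset.univ_inter]
  have hcntB : (∑ x : Fin n, ∑ y : Fin n,
      if (¬ G.Adj (Sum.inl x) (Sum.inr y)) ∧ y ∈ B then 1 else 0)
      = ∑ x ∈ A, stmt12cH G (g x) := by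
    rw [Finset.sum_comm]
    have h1 : ∀ y : Fin n,
        (∑ x : Fin n, if (¬ G.Adj (Sum.inl x) (Sum.inr y)) ∧ y ∈ B then 1 else 0)
        = if y ∈ B then stmt12cH G y else 0 := by
      intro y; by_cases hy : y ∈ B <;> simp [hy, hcH]
    rw [Finset.sum_congr rfl fun y _ => h1 y, Finset.sum_ite_mem, Finset.univ_inter, hBdef,
      Finset.sum_image hinj]
  have hcntAB : (∑ x : Fin n, ∑ y : Fin n, if x ∈ A ∧ y ∈ B then 1 else 0)
      ≤ (k + 2) * (k + 2) := by
    have h1 : ∀ x : Fin n, (∑ y : Fin n, if x ∈ A ∧ y ∈ B then 1 else 0)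
        = if x ∈ A then B.card else 0 := by
      intro x; by_cases hx : x ∈ A <;>
        simp [hx, Finset.sum_ite_mem, Finset.univ_inter]
    rw [Finset.sum_congr rfl fun x _ => h1 x, Finset.sum_ite_mem, Finset.univ_inter,
      Finset.sum_const, smul_eq_mul, hA]
    exact Nat.mul_le_mul_left _ hBcard
  have hpt : ∀ x y : Fin n,
      ((if (¬ G.Adj (Sum.inl x) (Sum.inr y)) ∧ x ∈ A then 1 else 0)
        + (if (¬ G.Adj (Sum.inl x) (Sum.inr y)) ∧ y ∈ B then 1 else 0) : ℕ)
      ≤ (if ¬ G.Adj (Sum.inl x) (Sum.inr y) then 1 else 0)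
        + (if x ∈ A ∧ y ∈ B then 1 else 0) := by
    intro x y
    by_cases h : G.Adj (Sum.inl x) (Sum.inr y) <;> by_cases hx : x ∈ A <;>
      by_cases hy : y ∈ B <;> simp [h, hx, hy]
  have hsum : (∑ x ∈ A, stmt12rH G x) + (∑ x ∈ A, stmt12cH G (g x))
      ≤ (∑ x : Fin n, ∑ y : Fin n, if ¬ G.Adj (Sum.inl x) (Sum.inr y) then 1 else 0)
        + (k + 2) * (k + 2) := by
    rw [← hcntA, ← hcntB]
    calc (∑ x : Fin n, ∑ y : Fin n, if (¬ G.Adj (Sum.inl x) (Sum.inr y)) ∧ x ∈ A then 1 else 0)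
          + (∑ x : Fin n, ∑ y : Fin n, if (¬ G.Adj (Sum.inl x) (Sum.inr y)) ∧ y ∈ B then 1 else 0)
        = ∑ x : Fin n, ∑ y : Fin n,
            ((if (¬ G.Adj (Sum.inl x) (Sum.inr y)) ∧ x ∈ A then 1 else 0)
              + (if (¬ G.Adj (Sum.inl x) (Sum.inr y)) ∧ y ∈ B then 1 else 0)) := by
          simp_rw [Finset.sum_add_distrib]
      _ ≤ ∑ x : Fin n, ∑ y : Fin n,
            ((if ¬ G.Adj (Sum.inl x) (Sum.inr y) then 1 else 0)
              + (if x ∈ A ∧ y ∈ B then 1 else 0)) :=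
          Finset.sum_le_sum fun x _ => Finset.sum_le_sum fun y _ => hpt x y
      _ = (∑ x : Fin n, ∑ y : Fin n, if ¬ G.Adj (Sum.inl x) (Sum.inr y) then 1 else 0)
          + (∑ x : Fin n, ∑ y : Fin n, if x ∈ A ∧ y ∈ B then 1 else 0) := by
          simp_rw [Finset.sum_add_distrib]
      _ ≤ _ := by exact Nat.add_le_add_left hcntAB _
  have hlow : (k + 2) * n ≤ (∑ x ∈ A, stmt12rH G x) + (∑ x ∈ A, stmt12cH G (g x)) := by
    rw [← Finset.sum_add_distrib]
    have h1 : ∀ x ∈ A, n ≤ stmt12rH G x + stmt12cH G (g x) := by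
      intro x hx
      have h2 := hcl x (g x) (hna x hx)
      have h3 := hrow x
      have h4 := hcol (g x)
      omega
    calc (k + 2) * n = ∑ _x ∈ A, n := by rw [Finset.sum_const, hA, smul_eq_mul]
      _ ≤ _ := Finset.sum_le_sum h1
  have hEH : (∑ x : Fin n, ∑ y : Fin n, if G.Adj (Sum.inl x) (Sum.inr y) then 1 else 0)
      + (∑ x : Fin n, ∑ y : Fin n, if ¬ G.Adj (Sum.inl x) (Sum.inr y) then 1 else 0)
      = n * n := by
    have hone : ∀ x y : Fin n, ((if G.Adj (Sum.inl x) (Sum.inr y) then 1 else 0)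
        + (if ¬ G.Adj (Sum.inl x) (Sum.inr y) then 1 else 0) : ℕ) = 1 := fun x y => by
      by_cases h : G.Adj (Sum.inl x) (Sum.inr y) <;> simp [h]
    calc (∑ x : Fin n, ∑ y : Fin n, if G.Adj (Sum.inl x) (Sum.inr y) then 1 else 0)
        + (∑ x : Fin n, ∑ y : Fin n, if ¬ G.Adj (Sum.inl x) (Sum.inr y) then 1 else 0)
        = ∑ x : Fin n, ∑ y : Fin n, ((if G.Adj (Sum.inl x) (Sum.inr y) then 1 else 0)
            + (if ¬ G.Adj (Sum.inl x) (Sum.inr y) then 1 else 0)) := by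
          simp_rw [Finset.sum_add_distrib]
      _ = ∑ _x : Fin n, ∑ _y : Fin n, (1 : ℕ) :=
          Finset.sum_congr rfl fun x _ => Finset.sum_congr rfl fun y _ => hone x y
      _ = n * n := by simp
  rw [hE] at he
  have hnn : n * n = n * (n - k - 2) + n * (k + 2) := by
    have h : (n - k - 2) + (k + 2) = n := by omega
    calc n * n = n * ((n - k - 2) + (k + 2)) := by rw [h]
      _ = _ := Nat.mul_add n _ _
  have hp : (k + 2) ^ 2 = (k + 2) * (k + 2) := by ring
  have hmc : (k + 2) * n = n * (k + 2) := Nat.mul_comm _ _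
  linarith

private lemma stmt12cover {k : ℕ} (hk : 1 ≤ k) (hn : 2 * k + 3 ≤ n)
    (hnomatch : ∀ (A : Finset (Fin n)) (g : Fin n → Fin n), A.card = k + 2 →
      (∀ x ∈ A, ∀ y ∈ A, g x = g y → x = y) →
      (∀ x ∈ A, ¬ G.Adj (Sum.inl x) (Sum.inr (g x))) → False) :
    ∃ S T : Finset (Fin n), 2 * n - k - 1 ≤ S.card + T.card ∧
      ∀ x ∈ S, ∀ y ∈ T, G.Adj (Sum.inl x) (Sum.inr y) := by
  classical
  set N : Fin n → Finset (Fin n) :=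
    fun x => Finset.univ.filter (fun y => ¬ G.Adj (Sum.inl x) (Sum.inr y)) with hN
  set d : ℕ := Finset.univ.sup (fun s : Finset (Fin n) => s.card - (s.biUnion N).card) with hd
  have hstepA : n ≤ d + k + 1 := by
    by_contra hcon
    push_neg at hcon
    have hdn : d + k + 2 ≤ n := by omega
    set t : Fin n → Finset (Fin n ⊕ Fin d) :=
      fun x => (N x).image Sum.inl ∪ Finset.univ.image Sum.inr with ht
    have hhall : ∀ s : Finset (Fin n), s.card ≤ (s.biUnion t).card := by
      intro s
      rcases s.eq_empty_or_nonempty with rfl | ⟨x0, hx0⟩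
      · simp
      · have hsub : ((s.biUnion N).image Sum.inl ∪ Finset.univ.image Sum.inr) ⊆ s.biUnion t := by
          intro v hv
          rcases Finset.mem_union.1 hv with hv | hv
          · obtain ⟨y, hy, rfl⟩ := Finset.mem_image.1 hv
            obtain ⟨x, hxs, hyN⟩ := Finset.mem_biUnion.1 hy
            exact Finset.mem_biUnion.2
              ⟨x, hxs, Finset.mem_union_left _ (Finset.mem_image_of_mem _ hyN)⟩
          · exact Finset.mem_biUnion.2 ⟨x0, hx0, Finset.mem_union_right _ hv⟩
        have hdisj : Disjoint ((s.biUnion N).image Sum.inl)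
            (Finset.univ.image Sum.inr : Finset (Fin n ⊕ Fin d)) := by
          rw [Finset.disjoint_left]
          rintro v hv1 hv2
          obtain ⟨a, _, rfl⟩ := Finset.mem_image.1 hv1
          obtain ⟨b, _, h⟩ := Finset.mem_image.1 hv2
          exact absurd h (by simp)
        have hcard : ((s.biUnion N).image Sum.inl ∪
            (Finset.univ.image Sum.inr : Finset (Fin n ⊕ Fin d))).card
            = (s.biUnion N).card + d := by
          rw [Finset.card_union_of_disjoint hdisj,
            Finset.card_image_of_injective _ Sum.inl_injective,
            Finset.card_image_of_injective _ Sum.inr_injective]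
          simp
        have hle : s.card - (s.biUnion N).card ≤ d :=
          Finset.le_sup (f := fun s : Finset (Fin n) => s.card - (s.biUnion N).card)
            (Finset.mem_univ s)
        have := Finset.card_le_card hsub
        omega
    obtain ⟨f, hfinj, hft⟩ := (Finset.all_card_le_biUnion_card_iff_exists_injective t).1 hhall
    set M : Finset (Fin n) := Finset.univ.filter (fun x => ∃ y : Fin n, f x = Sum.inl y) with hM
    have hMc : (Finset.univ.filter (fun x => ¬ ∃ y : Fin n, f x = Sum.inl y)).card ≤ d := by
      have h1 : ∀ x ∈ Finset.univ.filter (fun x => ¬ ∃ y : Fin n, f x = Sum.inl y),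
          f x ∈ (Finset.univ.image Sum.inr : Finset (Fin n ⊕ Fin d)) := by
        intro x hx
        rw [Finset.mem_filter] at hx
        rcases Finset.mem_union.1 (hft x) with h | h
        · obtain ⟨y, _, hy⟩ := Finset.mem_image.1 h
          exact absurd ⟨y, hy.symm⟩ hx.2
        · exact h
      have h2 := Finset.card_le_card_of_injOn f h1 (fun a _ b _ hab => hfinj hab)
      calc _ ≤ (Finset.univ.image Sum.inr : Finset (Fin n ⊕ Fin d)).card := h2
        _ = d := by rw [Finset.card_image_of_injective _ Sum.inr_injective]; simp
    have hMcard : k + 2 ≤ M.card := by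
      have hsplit : (Finset.univ : Finset (Fin n)) ⊆
          M ∪ Finset.univ.filter (fun x => ¬ ∃ y : Fin n, f x = Sum.inl y) := by
        intro x _
        by_cases hx : ∃ y : Fin n, f x = Sum.inl y
        · exact Finset.mem_union_left _ (by simp [hM, hx])
        · exact Finset.mem_union_right _ (Finset.mem_filter.2 ⟨Finset.mem_univ x, hx⟩)
      have h4 := Finset.card_le_card hsplit
      have h5 := Finset.card_union_le M
        (Finset.univ.filter (fun x => ¬ ∃ y : Fin n, f x = Sum.inl y))
      rw [Finset.card_univ, Fintype.card_fin] at h4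
      omega
    obtain ⟨A, hAM, hAcard⟩ := Finset.exists_subset_card_eq hMcard
    set g : Fin n → Fin n := fun x => Sum.elim id (fun _ => x) (f x) with hg
    have hfg : ∀ x ∈ A, f x = Sum.inl (g x) := by
      intro x hx
      obtain ⟨y, hy⟩ := (Finset.mem_filter.1 (hAM hx)).2
      rw [hg, hy]; simp [hy]
    refine hnomatch A g hAcard (fun x hx y hy hxy => hfinj ?_) (fun x hx => ?_)
    · rw [hfg x hx, hfg y hy, hxy]
    · have h1 := hft x
      rw [hfg x hx] at h1
      rcases Finset.mem_union.1 h1 with h | h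
      · obtain ⟨y, hyN, hy⟩ := Finset.mem_image.1 h
        have : y = g x := Sum.inl_injective hy
        subst this
        simpa [hN] using hyN
      · obtain ⟨b, _, hb⟩ := Finset.mem_image.1 h
        exact absurd hb (by simp)
  obtain ⟨s0, _, hs0⟩ := Finset.exists_mem_eq_sup (Finset.univ : Finset (Finset (Fin n)))
    ⟨∅, Finset.mem_univ ∅⟩ (fun s : Finset (Fin n) => s.card - (s.biUnion N).card)
  have hd0 : d = s0.card - (s0.biUnion N).card := hs0
  have hdpos : n - k - 1 ≤ d := by omega
  have hbc : (s0.biUnion N).card ≤ n := by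
    calc (s0.biUnion N).card ≤ (Finset.univ : Finset (Fin n)).card :=
        Finset.card_le_card (Finset.subset_univ _)
      _ = n := by simp
  have hs0card : s0.card ≤ n := by
    calc s0.card ≤ (Finset.univ : Finset (Fin n)).card :=
        Finset.card_le_card (Finset.subset_univ _)
      _ = n := by simp
  refine ⟨s0, Finset.univ \ s0.biUnion N, ?_, ?_⟩
  · have hT : (Finset.univ \ s0.biUnion N).card = n - (s0.biUnion N).card := by
      rw [Finset.card_sdiff_of_subset (Finset.subset_univ _)]; simp
    omega
  · intro x hx y hy
    rw [Finset.mem_sdiff] at hy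
    by_contra hadj
    exact hy.2 (Finset.mem_biUnion.2 ⟨x, hx, by simp [hN, hadj]⟩)

end StmtTwelveAux

/-- A B-closed balanced bipartite graph on `2n` vertices with `n ≥ 2k+3`, `k ≥ 1` and
`e(G) > n(n-k-2)+(k+2)²` contains a complete bipartite subgraph on `2n-k-1` vertices;
furthermore if `δ(G) ≥ k` then `K_{n,n-k-1} ⊆ G`, or `k = 1` and `K_{n-1,n-1} ⊆ G`. -/


theorem stmt_12 (n k : ℕ) (G : SimpleGraph (Fin n ⊕ Fin n)) (hbip : CrossOnly G)
    (hk : 1 ≤ k) (hn : 2 * k + 3 ≤ n) (hcl : IsBClosed G)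
    (he : n * (n - k - 2) + (k + 2) ^ 2 < G.edgeFinset.card) :
    (∃ (s t : Finset (Fin n)), s.card + t.card = 2 * n - k - 1 ∧
        ∀ x ∈ s, ∀ y ∈ t, G.Adj (Sum.inl x) (Sum.inr y)) ∧
    ((∀ v, k ≤ G.degree v) →
      HasCompleteBipSub G n (n - k - 1) ∨ (k = 1 ∧ HasCompleteBipSub G (n - 1) (n - 1))) := by
  classical
  obtain ⟨S, T, hST, hSTadj⟩ := stmt12cover G hk hn
    (fun A g hA hinj hna => stmt12nomatch G hbip hcl hn he A g hA hinj hna)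
  have hScard : S.card ≤ n := by
    calc S.card ≤ (Finset.univ : Finset (Fin n)).card :=
        Finset.card_le_card (Finset.subset_univ _)
      _ = n := by simp
  have hTcard : T.card ≤ n := by
    calc T.card ≤ (Finset.univ : Finset (Fin n)).card :=
        Finset.card_le_card (Finset.subset_univ _)
      _ = n := by simp
  constructor
  · -- part 1
    have hTc : 2 * n - k - 1 - S.card ≤ T.card := by omega
    obtain ⟨t, htT, htc⟩ := Finset.exists_subset_card_eq hTc
    exact ⟨S, t, by omega, fun x hx y hy => hSTadj x hx y (htT hy)⟩
  · -- part 2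
    intro hdel
    set F := Finset.univ.filter (fun p : Finset (Fin n) × Finset (Fin n) =>
      (2 * n - k - 1 ≤ p.1.card + p.2.card) ∧
        ∀ x ∈ p.1, ∀ y ∈ p.2, G.Adj (Sum.inl x) (Sum.inr y)) with hF
    have hFne : F.Nonempty :=
      ⟨(S, T), Finset.mem_filter.2 ⟨Finset.mem_univ _, hST, hSTadj⟩⟩
    obtain ⟨⟨S0, T0⟩, hmem, hmax⟩ :=
      Finset.exists_max_image F (fun p => p.1.card + p.2.card) hFne
    rw [hF, Finset.mem_filter] at hmem
    obtain ⟨-, hcard0, hadj0⟩ := hmem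
    dsimp only at hcard0 hadj0
    have hS0card : S0.card ≤ n := by
      calc S0.card ≤ (Finset.univ : Finset (Fin n)).card :=
          Finset.card_le_card (Finset.subset_univ _)
        _ = n := by simp
    have hT0card : T0.card ≤ n := by
      calc T0.card ≤ (Finset.univ : Finset (Fin n)).card :=
          Finset.card_le_card (Finset.subset_univ _)
        _ = n := by simp
    by_cases hSu : S0 = Finset.univ
    · left
      have hT0 : n - k - 1 ≤ T0.card := by
        have : S0.card = n := by rw [hSu]; simp
        omega
      obtain ⟨t, htT, htc⟩ := Finset.exists_subset_card_eq hT0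
      refine ⟨Finset.univ, t, Or.inl ⟨by simp, htc⟩, fun x _ y hy => ?_⟩
      exact hadj0 x (by rw [hSu]; exact Finset.mem_univ x) y (htT hy)
    · by_cases hTu : T0 = Finset.univ
      · left
        have hS0 : n - k - 1 ≤ S0.card := by
          have : T0.card = n := by rw [hTu]; simp
          omega
        obtain ⟨s, hsS, hsc⟩ := Finset.exists_subset_card_eq hS0
        refine ⟨s, Finset.univ, Or.inr ⟨hsc, by simp⟩, fun x hx y _ => ?_⟩
        exact hadj0 x (hsS hx) y (by rw [hTu]; exact Finset.mem_univ y)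
      · -- both proper : show k = 1 and S0, T0 have card n - 1
        obtain ⟨x, hx⟩ : ∃ x, x ∉ S0 := by
          by_contra h; push_neg at h; exact hSu (Finset.eq_univ_iff_forall.2 h)
        obtain ⟨y, hy⟩ : ∃ y, y ∉ T0 := by
          by_contra h; push_neg at h; exact hTu (Finset.eq_univ_iff_forall.2 h)
        have hSle : k + S0.card ≤ n := by
          have hex : ∃ y' ∈ T0, ¬ G.Adj (Sum.inl x) (Sum.inr y') := by
            by_contra hc; push_neg at hc
            have hmem' : (insert x S0, T0) ∈ F := by
              rw [hF, Finset.mem_filter]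
              refine ⟨Finset.mem_univ _, ?_, ?_⟩
              · have : S0.card ≤ (insert x S0).card :=
                  Finset.card_le_card (Finset.subset_insert _ _)
                dsimp only
                omega
              · intro a ha b hb
                rcases Finset.mem_insert.1 ha with rfl | ha
                · exact hc b hb
                · exact hadj0 a ha b hb
            have h2 := hmax _ hmem'
            dsimp only at h2
            rw [Finset.card_insert_of_notMem hx] at h2
            omega
          obtain ⟨y', hy'T, hy'na⟩ := hex
          have h1 := hcl x y' hy'na
          have h2 : S0.card ≤ G.degree (Sum.inr y') := by
            have himg : S0.image Sum.inl ⊆ G.neighborFinset (Sum.inr y') := by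
              intro v hv; obtain ⟨a, ha, rfl⟩ := Finset.mem_image.1 hv
              rw [SimpleGraph.mem_neighborFinset]
              exact (hadj0 a ha y' hy'T).symm
            calc S0.card = (S0.image Sum.inl).card :=
                (Finset.card_image_of_injective _ Sum.inl_injective).symm
              _ ≤ _ := Finset.card_le_card himg
          have h3 := hdel (Sum.inl x)
          omega
        have hTle : k + T0.card ≤ n := by
          have hex : ∃ x' ∈ S0, ¬ G.Adj (Sum.inl x') (Sum.inr y) := by
            by_contra hc; push_neg at hc
            have hmem' : (S0, insert y T0) ∈ F := by
              rw [hF, Finset.mem_filter]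
              refine ⟨Finset.mem_univ _, ?_, ?_⟩
              · have : T0.card ≤ (insert y T0).card :=
                  Finset.card_le_card (Finset.subset_insert _ _)
                dsimp only
                omega
              · intro a ha b hb
                rcases Finset.mem_insert.1 hb with rfl | hb
                · exact hc a ha
                · exact hadj0 a ha b hb
            have h2 := hmax _ hmem'
            dsimp only at h2
            rw [Finset.card_insert_of_notMem hy] at h2
            omega
          obtain ⟨x', hx'S, hx'na⟩ := hex
          have h1 := hcl x' y hx'na
          have h2 : T0.card ≤ G.degree (Sum.inl x') := by
            have himg : T0.image Sum.inr ⊆ G.neighborFinset (Sum.inl x') := by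
              intro v hv; obtain ⟨b, hb, rfl⟩ := Finset.mem_image.1 hv
              rw [SimpleGraph.mem_neighborFinset]
              exact hadj0 x' hx'S b hb
            calc T0.card = (T0.image Sum.inr).card :=
                (Finset.card_image_of_injective _ Sum.inr_injective).symm
              _ ≤ _ := Finset.card_le_card himg
          have h3 := hdel (Sum.inr y)
          omega
        right
        refine ⟨by omega, S0, T0, Or.inl ⟨by omega, by omega⟩, hadj0⟩
end
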